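/- arXiv:2509.25942 — 9 statements merged into one kernel-verified Lean document; each statement's English description precedes it below -/
import Mathlib

section
/- Under the standing invertibility assumption (*) and α+β ≠ 0, an m×n complex matrix X satisfies the NARE X C X − X D − A X + B = 0 if and only if I − G_0 X is invertible and X satisfies the NDARE X − H_0 = F_0 X (I − G_0 X)^{−1} E_0. In particular, the NARE and the NDARE have the same solution set. -/
open Matrix

section Aux
variable {m n : ℕ}
  (A : Matrix (Fin m) (Fin m) ℂ) (D : Matrix (Fin n) (Fin n) ℂ)
  (B : Matrix (Fin m) (Fin n) ℂ) (C : Matrix (Fin n) (Fin m) ℂ)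
  (α β : ℂ) (X : Matrix (Fin m) (Fin n) ℂ)

/-- cancellation helper -/
lemma aux_hAX (uAβ : IsUnit (β • (1 : Matrix (Fin m) (Fin m) ℂ) + A).det)
    (Z : Matrix (Fin m) (Fin n) ℂ) :
    (β • (1 : Matrix (Fin m) (Fin m) ℂ) + A)⁻¹ * (A * Z)
      = Z - β • ((β • 1 + A)⁻¹ * Z) := by
  have h : (β • (1 : Matrix (Fin m) (Fin m) ℂ) + A)⁻¹ * ((β • 1 + A) * Z) = Z :=
    Matrix.nonsing_inv_mul_cancel_left _ _ uAβ
  rw [Matrix.add_mul, Matrix.smul_mul, Matrix.one_mul, Matrix.mul_add,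
    Matrix.mul_smul] at h
  linear_combination (norm := module) h

lemma aux_hiDD (uDα : IsUnit (α • (1 : Matrix (Fin n) (Fin n) ℂ) + D).det) :
    (α • (1 : Matrix (Fin n) (Fin n) ℂ) + D)⁻¹ * D = 1 - α • (α • 1 + D)⁻¹ := by
  have h : (α • (1 : Matrix (Fin n) (Fin n) ℂ) + D)⁻¹ * (α • 1 + D) = 1 :=
    Matrix.nonsing_inv_mul _ uDα
  rw [Matrix.mul_add, Matrix.mul_smul, Matrix.mul_one] at h
  linear_combination (norm := module) h

lemma aux_hDZ (uDα : IsUnit (α • (1 : Matrix (Fin n) (Fin n) ℂ) + D).det)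
    (Z : Matrix (Fin n) (Fin m) ℂ) :
    D * ((α • (1 : Matrix (Fin n) (Fin n) ℂ) + D)⁻¹ * Z)
      = Z - α • ((α • 1 + D)⁻¹ * Z) := by
  have h : (α • (1 : Matrix (Fin n) (Fin n) ℂ) + D) * ((α • 1 + D)⁻¹ * Z) = Z :=
    Matrix.mul_nonsing_inv_cancel_left _ _ uDα
  rw [Matrix.add_mul, Matrix.smul_mul, Matrix.one_mul] at h
  linear_combination (norm := module) h

/-- Id1 -/
lemma aux_id1 (uAβ : IsUnit (β • (1 : Matrix (Fin m) (Fin m) ℂ) + A).det) :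
    (1 - C * (β • 1 + A)⁻¹ * X) * (((-β) • 1 + D) - C * X)
      = (((-β) • 1 + D) - C * (β • 1 + A)⁻¹ * B)
        + C * (β • 1 + A)⁻¹ * (X * C * X - X * D - A * X + B) := by
  simp only [Matrix.sub_mul, Matrix.mul_sub, Matrix.add_mul, Matrix.mul_add,
    Matrix.smul_mul, Matrix.mul_smul, Matrix.one_mul, Matrix.mul_one,
    Matrix.mul_assoc, aux_hAX A β uAβ, smul_sub, smul_add]
  module

/-- Id2 -/
lemma aux_id2 (uDα : IsUnit (α • (1 : Matrix (Fin n) (Fin n) ℂ) + D).det) :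
    (B * (α • 1 + D)⁻¹ - X) * (((-β) • 1 + D) - C * X)
      = (X * C * X - X * D - A * X + B)
        + (((β • 1 + A) - B * (α • 1 + D)⁻¹ * C) * X - (α + β) • (B * (α • 1 + D)⁻¹)) := by
  simp only [Matrix.sub_mul, Matrix.mul_sub, Matrix.add_mul, Matrix.mul_add,
    Matrix.smul_mul, Matrix.mul_smul, Matrix.one_mul, Matrix.mul_one,
    Matrix.mul_assoc, aux_hiDD D α uDα, smul_sub, smul_add, add_smul]
  match_scalars <;> ring_nf

/-- Id2' -/
lemma aux_id2' (uDα : IsUnit (α • (1 : Matrix (Fin n) (Fin n) ℂ) + D).det) :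
    (X - B * (α • 1 + D)⁻¹) * ((α • 1 + D) - C * X)
      = -(X * C * X - X * D - A * X + B) - (((-α) • 1 + A) - B * (α • 1 + D)⁻¹ * C) * X := by
  simp only [Matrix.sub_mul, Matrix.mul_sub, Matrix.add_mul, Matrix.mul_add,
    Matrix.smul_mul, Matrix.mul_smul, Matrix.one_mul, Matrix.mul_one,
    Matrix.mul_assoc, aux_hiDD D α uDα, smul_sub, smul_add, neg_sub, neg_add]
  match_scalars <;> ring_nf

/-- IdV -/
lemma aux_idV (uDα : IsUnit (α • (1 : Matrix (Fin n) (Fin n) ℂ) + D).det) :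
    (((-α) • 1 + A) - X * C) * (1 - X * (α • 1 + D)⁻¹ * C)
      = (((-α) • 1 + A) - B * (α • 1 + D)⁻¹ * C)
        + (X * C * X - X * D - A * X + B) * (α • 1 + D)⁻¹ * C := by
  simp only [Matrix.sub_mul, Matrix.mul_sub, Matrix.add_mul, Matrix.mul_add,
    Matrix.smul_mul, Matrix.mul_smul, Matrix.one_mul, Matrix.mul_one,
    Matrix.mul_assoc, aux_hDZ D α uDα, smul_sub, smul_add]
  match_scalars <;> ring_nf

/-- S is invertible -/
lemma aux_uS (uAβ : IsUnit (β • (1 : Matrix (Fin m) (Fin m) ℂ) + A).det)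
    (uDα : IsUnit (α • (1 : Matrix (Fin n) (Fin n) ℂ) + D).det)
    (uT : IsUnit ((β • 1 + A) - B * (α • 1 + D)⁻¹ * C).det) :
    IsUnit (((α • 1 + D) - C * (β • 1 + A)⁻¹ * B)).det := by
  have h1 : ((α • (1 : Matrix (Fin n) (Fin n) ℂ) + D) - C * (β • 1 + A)⁻¹ * B)
      = (α • 1 + D) * (1 - ((α • 1 + D)⁻¹ * C) * ((β • 1 + A)⁻¹ * B)) := by
    rw [Matrix.mul_sub, Matrix.mul_one, ← Matrix.mul_assoc,
      Matrix.mul_nonsing_inv_cancel_left _ _ uDα, Matrix.mul_assoc]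
  have h3 : (1 : Matrix (Fin m) (Fin m) ℂ) - ((β • 1 + A)⁻¹ * B) * ((α • 1 + D)⁻¹ * C)
      = (β • 1 + A)⁻¹ * ((β • 1 + A) - B * (α • 1 + D)⁻¹ * C) := by
    simp only [Matrix.mul_sub, Matrix.nonsing_inv_mul _ uAβ, Matrix.mul_assoc]
  rw [h1, det_mul, det_one_sub_mul_comm, h3, det_mul]
  exact uDα.mul ((Matrix.isUnit_nonsing_inv_det _ uAβ).mul uT)

/-- det transfer for V -/
lemma aux_detV (uDα : IsUnit (α • (1 : Matrix (Fin n) (Fin n) ℂ) + D).det) :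
    (1 - X * (α • 1 + D)⁻¹ * C).det
      = (α • (1 : Matrix (Fin n) (Fin n) ℂ) + D)⁻¹.det * ((α • 1 + D) - C * X).det := by
  have h1 : (1 : Matrix (Fin m) (Fin m) ℂ) - X * (α • 1 + D)⁻¹ * C
      = 1 - X * ((α • 1 + D)⁻¹ * C) := by rw [Matrix.mul_assoc]
  have h2 : (1 : Matrix (Fin n) (Fin n) ℂ) - ((α • 1 + D)⁻¹ * C) * X
      = (α • 1 + D)⁻¹ * ((α • 1 + D) - C * X) := by
    rw [Matrix.mul_sub, Matrix.nonsing_inv_mul _ uDα, Matrix.mul_assoc]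
  rw [h1, det_one_sub_mul_comm, h2, det_mul]

end Aux


set_option maxHeartbeats 2000000 in
/-- Under the standing invertibility assumption (*) and `α+β ≠ 0`, a complex
`m×n` matrix `X` satisfies the NARE `X C X − X D − A X + B = 0` iff `I − G₀ X` is invertible and
`X` satisfies the NDARE `X − H₀ = F₀ X (I − G₀ X)⁻¹ E₀`. -/
theorem nare_iff_ndare {m n : ℕ} (hm : 0 < m) (hn : 0 < n)
    (A : Matrix (Fin m) (Fin m) ℂ) (D : Matrix (Fin n) (Fin n) ℂ)
    (B : Matrix (Fin m) (Fin n) ℂ) (C : Matrix (Fin n) (Fin m) ℂ)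
    (α β : ℂ) (hαβ : α + β ≠ 0)
    (hDα : IsUnit (α • (1 : Matrix (Fin n) (Fin n) ℂ) + D))
    (hAβ : IsUnit (β • (1 : Matrix (Fin m) (Fin m) ℂ) + A))
    (hABc : IsUnit ((β • 1 + A) - B * (α • 1 + D)⁻¹ * C))
    (hAmc : IsUnit (((-α) • 1 + A) - B * (α • 1 + D)⁻¹ * C))
    (hDmc : IsUnit (((-β) • 1 + D) - C * (β • 1 + A)⁻¹ * B))
    (E₀ : Matrix (Fin n) (Fin n) ℂ)
    (F₀ : Matrix (Fin m) (Fin m) ℂ)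
    (G₀ : Matrix (Fin n) (Fin m) ℂ)
    (H₀ : Matrix (Fin m) (Fin n) ℂ)
    (hE : E₀ = -((((α • 1 + D) - C * (β • 1 + A)⁻¹ * B)⁻¹) *
      (((-β) • 1 + D) - C * (β • 1 + A)⁻¹ * B)))
    (hF : F₀ = -((((β • 1 + A) - B * (α • 1 + D)⁻¹ * C)⁻¹) *
      (((-α) • 1 + A) - B * (α • 1 + D)⁻¹ * C)))
    (hG : G₀ = (α + β) • ((((α • 1 + D) - C * (β • 1 + A)⁻¹ * B)⁻¹) * C * (β • 1 + A)⁻¹))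
    (hH : H₀ = (α + β) • ((((β • 1 + A) - B * (α • 1 + D)⁻¹ * C)⁻¹) * B * (α • 1 + D)⁻¹))
    (X : Matrix (Fin m) (Fin n) ℂ) :
    X * C * X - X * D - A * X + B = 0 ↔
      IsUnit (1 - G₀ * X) ∧ X - H₀ = F₀ * X * (1 - G₀ * X)⁻¹ * E₀ := by
  have hs : α + β ≠ 0 := hαβ
  set Aβ : Matrix (Fin m) (Fin m) ℂ := β • 1 + A with hAβd
  set Dα : Matrix (Fin n) (Fin n) ℂ := α • 1 + D with hDαd
  set Am : Matrix (Fin m) (Fin m) ℂ := (-α) • 1 + A with hAmd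
  set Dm : Matrix (Fin n) (Fin n) ℂ := (-β) • 1 + D with hDmd
  set T : Matrix (Fin m) (Fin m) ℂ := Aβ - B * Dα⁻¹ * C with hTd
  set Amp : Matrix (Fin m) (Fin m) ℂ := Am - B * Dα⁻¹ * C with hAmpd
  set S : Matrix (Fin n) (Fin n) ℂ := Dα - C * Aβ⁻¹ * B with hSd
  set Dmp : Matrix (Fin n) (Fin n) ℂ := Dm - C * Aβ⁻¹ * B with hDmpd
  set N : Matrix (Fin m) (Fin n) ℂ := X * C * X - X * D - A * X + B with hNd
  have uAβ : IsUnit Aβ.det := (Matrix.isUnit_iff_isUnit_det _).mp hAβ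
  have uDα : IsUnit Dα.det := (Matrix.isUnit_iff_isUnit_det _).mp hDα
  have uT : IsUnit T.det := (Matrix.isUnit_iff_isUnit_det _).mp hABc
  have uAmp : IsUnit Amp.det := (Matrix.isUnit_iff_isUnit_det _).mp hAmc
  have uDmp : IsUnit Dmp.det := (Matrix.isUnit_iff_isUnit_det _).mp hDmc
  have uS : IsUnit S.det :=
    aux_uS (A := A) (D := D) (B := B) (C := C) (α := α) (β := β) uAβ uDα uT
  have Id1 : (1 - C * Aβ⁻¹ * X) * (Dm - C * X) = Dmp + C * Aβ⁻¹ * N :=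
    aux_id1 (A := A) (D := D) (B := B) (C := C) (β := β) (X := X) uAβ
  have Id2 : (B * Dα⁻¹ - X) * (Dm - C * X) = N + (T * X - (α + β) • (B * Dα⁻¹)) :=
    aux_id2 (A := A) (D := D) (B := B) (C := C) (α := α) (β := β) (X := X) uDα
  have Id2' : (X - B * Dα⁻¹) * (Dα - C * X) = -N - Amp * X :=
    aux_id2' (A := A) (D := D) (B := B) (C := C) (α := α) (X := X) uDα
  have IdV : (Am - X * C) * (1 - X * Dα⁻¹ * C) = Amp + N * Dα⁻¹ * C :=
    aux_idV (A := A) (D := D) (B := B) (C := C) (α := α) (X := X) uDα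
  have hsh1 : Dα - C * X = (Dm - C * X) + (α + β) • 1 := by
    rw [hDαd, hDmd]; module
  have hsh2 : Dm - C * X = (Dα - C * X) - (α + β) • 1 := by
    rw [hDαd, hDmd]; module
  have hTA' : T - Amp = (α + β) • (1 : Matrix (Fin m) (Fin m) ℂ) := by
    rw [hTd, hAmpd, hAβd, hAmd]; module
  have hTA : T * X - Amp * X = (α + β) • X := by
    rw [← Matrix.sub_mul, hTA', Matrix.smul_mul, Matrix.one_mul]
  have hSE : S * E₀ = -Dmp := by
    rw [hE, Matrix.mul_neg, Matrix.mul_nonsing_inv_cancel_left _ _ uS]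
  have hTF : T * F₀ = -Amp := by
    rw [hF, Matrix.mul_neg, Matrix.mul_nonsing_inv_cancel_left _ _ uT]
  have hTH : T * H₀ = (α + β) • (B * Dα⁻¹) := by
    rw [hH, Matrix.mul_smul, Matrix.mul_assoc T⁻¹ B Dα⁻¹,
      Matrix.mul_nonsing_inv_cancel_left _ _ uT]
  have hSW : S * (1 - G₀ * X) = Dmp + (α + β) • (1 - C * Aβ⁻¹ * X) := by
    rw [hG, Matrix.smul_mul, Matrix.mul_sub, Matrix.mul_one, Matrix.mul_smul,
      Matrix.mul_assoc (S⁻¹ * C) Aβ⁻¹ X, Matrix.mul_assoc S⁻¹ C (Aβ⁻¹ * X),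
      Matrix.mul_nonsing_inv_cancel_left _ _ uS, ← Matrix.mul_assoc C Aβ⁻¹ X,
      hSd, hDmpd, hDαd, hDmd]
    module
  constructor
  · intro h0
    have hU : (1 - C * Aβ⁻¹ * X) * (Dm - C * X) = Dmp := by
      rw [Id1, h0, Matrix.mul_zero, add_zero]
    have hdU : ((1 - C * Aβ⁻¹ * X).det) * ((Dm - C * X).det) = Dmp.det := by
      rw [← det_mul, hU]
    have uU : IsUnit (1 - C * Aβ⁻¹ * X).det :=
      isUnit_of_mul_isUnit_left (by rw [hdU]; exact uDmp)
    have hVeq : (Am - X * C) * (1 - X * Dα⁻¹ * C) = Amp := by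
      rw [IdV, h0, Matrix.zero_mul, Matrix.zero_mul, add_zero]
    have uV : IsUnit (1 - X * Dα⁻¹ * C).det :=
      isUnit_of_mul_isUnit_right (by rw [← det_mul, hVeq]; exact uAmp)
    have uDαCX : IsUnit (Dα - C * X).det := by
      have h : (1 - X * Dα⁻¹ * C).det = Dα⁻¹.det * (Dα - C * X).det :=
        aux_detV (D := D) (C := C) (α := α) (X := X) uDα
      rw [h] at uV
      exact isUnit_of_mul_isUnit_right uV
    have hUDα : (1 - C * Aβ⁻¹ * X) * (Dα - C * X)
        = Dmp + (α + β) • (1 - C * Aβ⁻¹ * X) := by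
      rw [hsh1, Matrix.mul_add, hU, Matrix.mul_smul, Matrix.mul_one]
    have hSWU : S * (1 - G₀ * X) = (1 - C * Aβ⁻¹ * X) * (Dα - C * X) := by
      rw [hSW, hUDα]
    have uW : IsUnit (1 - G₀ * X) := by
      rw [Matrix.isUnit_iff_isUnit_det]
      have h : S.det * (1 - G₀ * X).det
          = (1 - C * Aβ⁻¹ * X).det * (Dα - C * X).det := by
        rw [← det_mul, ← det_mul, hSWU]
      have h2 : IsUnit (S.det * (1 - G₀ * X).det) := by rw [h]; exact uU.mul uDαCX
      exact isUnit_of_mul_isUnit_right h2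
    refine ⟨uW, ?_⟩
    have hWinv : (1 - G₀ * X)⁻¹ = (Dα - C * X)⁻¹ * ((1 - C * Aβ⁻¹ * X)⁻¹ * S) := by
      apply Matrix.inv_eq_right_inv
      have hW : (1 - G₀ * X) = S⁻¹ * ((1 - C * Aβ⁻¹ * X) * (Dα - C * X)) := by
        rw [← hSWU, Matrix.nonsing_inv_mul_cancel_left _ _ uS]
      rw [hW, Matrix.mul_assoc S⁻¹, Matrix.mul_assoc (1 - C * Aβ⁻¹ * X),
        Matrix.mul_nonsing_inv_cancel_left _ _ uDαCX,
        Matrix.mul_nonsing_inv_cancel_left _ _ uU, Matrix.nonsing_inv_mul _ uS]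
    have hWE : (1 - G₀ * X)⁻¹ * E₀ = -((Dα - C * X)⁻¹ * (Dm - C * X)) := by
      rw [hWinv, Matrix.mul_assoc (Dα - C * X)⁻¹ ((1 - C * Aβ⁻¹ * X)⁻¹ * S) E₀,
        Matrix.mul_assoc (1 - C * Aβ⁻¹ * X)⁻¹ S E₀, hSE, Matrix.mul_neg, ← hU,
        Matrix.nonsing_inv_mul_cancel_left _ _ uU, Matrix.mul_neg]
    have hkey : (X - H₀ + F₀ * X) * (Dα - C * X) = (α + β) • (F₀ * X) := by
      have h1 : T * ((X - H₀ + F₀ * X) * (Dα - C * X)) = T * ((α + β) • (F₀ * X)) := by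
        rw [← Matrix.mul_assoc, Matrix.mul_add, Matrix.mul_sub T X H₀, hTH,
          ← Matrix.mul_assoc T F₀ X, hTF]
        have h2 : T * X - (α + β) • (B * Dα⁻¹) + -Amp * X = (α + β) • (X - B * Dα⁻¹) := by
          rw [Matrix.neg_mul]
          linear_combination (norm := module) hTA
        rw [h2, Matrix.smul_mul, Id2', h0, neg_zero, zero_sub, Matrix.mul_smul,
          ← Matrix.mul_assoc T F₀ X, hTF, Matrix.neg_mul]
      have h3 := congrArg (fun Z => T⁻¹ * Z) h1
      simpa only [Matrix.nonsing_inv_mul_cancel_left _ _ uT] using h3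
    rw [Matrix.mul_assoc (F₀ * X) (1 - G₀ * X)⁻¹ E₀, hWE, hsh2]
    rw [Matrix.mul_sub]
    rw [Matrix.nonsing_inv_mul _ uDαCX]
    rw [Matrix.mul_smul]
    rw [Matrix.mul_one]
    rw [Matrix.mul_neg]
    rw [Matrix.mul_sub]
    rw [Matrix.mul_one]
    rw [Matrix.mul_smul]
    have h5 : (α + β) • ((F₀ * X) * (Dα - C * X)⁻¹) = X - H₀ + F₀ * X := by
      rw [← Matrix.smul_mul, ← hkey, Matrix.mul_nonsing_inv_cancel_right _ _ uDαCX]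
    rw [h5]
    abel
  · rintro ⟨uW, hnd⟩
    have uWd : IsUnit (1 - G₀ * X).det := (Matrix.isUnit_iff_isUnit_det _).mp uW
    have hEJ : E₀ * -(Dmp⁻¹ * S) = 1 := by
      rw [hE, Matrix.neg_mul, Matrix.mul_neg, neg_neg,
        Matrix.mul_assoc S⁻¹ Dmp (Dmp⁻¹ * S),
        Matrix.mul_nonsing_inv_cancel_left _ _ uDmp, Matrix.nonsing_inv_mul _ uS]
    have h3a : (X - H₀) * -(Dmp⁻¹ * S) = F₀ * X * (1 - G₀ * X)⁻¹ := by
      rw [hnd, Matrix.mul_assoc (F₀ * X * (1 - G₀ * X)⁻¹) E₀ (-(Dmp⁻¹ * S)), hEJ,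
        Matrix.mul_one]
    have h3 : (X - H₀) * -(Dmp⁻¹ * S) * (1 - G₀ * X) = F₀ * X := by
      rw [h3a, Matrix.mul_assoc (F₀ * X) (1 - G₀ * X)⁻¹ (1 - G₀ * X),
        Matrix.nonsing_inv_mul _ uWd, Matrix.mul_one]
    have hJW : (X - H₀) * -(Dmp⁻¹ * S) * (1 - G₀ * X)
        = -(X - H₀) - (α + β) • ((X - H₀) * (Dmp⁻¹ * (1 - C * Aβ⁻¹ * X))) := by
      rw [Matrix.mul_assoc (X - H₀) (-(Dmp⁻¹ * S)) (1 - G₀ * X)]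
      have hin : -(Dmp⁻¹ * S) * (1 - G₀ * X)
          = -(1 + (α + β) • (Dmp⁻¹ * (1 - C * Aβ⁻¹ * X))) := by
        rw [Matrix.neg_mul, Matrix.mul_assoc Dmp⁻¹ S (1 - G₀ * X), hSW,
          Matrix.mul_add, Matrix.nonsing_inv_mul _ uDmp, Matrix.mul_smul]
      rw [hin, Matrix.mul_neg, Matrix.mul_add, Matrix.mul_one, Matrix.mul_smul]
      module
    have h4 : -(X - H₀) - (α + β) • ((X - H₀) * (Dmp⁻¹ * (1 - C * Aβ⁻¹ * X)))
        = F₀ * X := by rw [← hJW]; exact h3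
    have h5 := congrArg (fun Z => T * Z) h4
    simp only [Matrix.mul_sub, Matrix.mul_neg, Matrix.mul_smul, ← Matrix.mul_assoc,
      hTH, hTF, Matrix.neg_mul, Matrix.mul_one] at h5
    -- h5 : -(T*X - s•(B*Dα⁻¹)) - s•((T*X - s•(B*Dα⁻¹))*Dmp⁻¹ - (T*X-s•(B*Dα⁻¹))*Dmp⁻¹*C*Aβ⁻¹*X)
    --        = -(Amp*X)
    have h5' : -(T * X - (α + β) • (B * Dα⁻¹))
        - (α + β) • ((T * X - (α + β) • (B * Dα⁻¹)) * Dmp⁻¹ * (1 - C * Aβ⁻¹ * X))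
        = -(Amp * X) := by
      have e : (T * X - (α + β) • (B * Dα⁻¹)) * Dmp⁻¹ * (1 - C * Aβ⁻¹ * X)
          = (T * X - (α + β) • (B * Dα⁻¹)) * Dmp⁻¹
            - (T * X - (α + β) • (B * Dα⁻¹)) * Dmp⁻¹ * C * Aβ⁻¹ * X := by
        rw [Matrix.mul_sub, Matrix.mul_one, ← Matrix.mul_assoc, ← Matrix.mul_assoc]
      rw [e]; exact h5
    have hstar_s : (α + β) • ((T * X - (α + β) • (B * Dα⁻¹)) * Dmp⁻¹ * (1 - C * Aβ⁻¹ * X))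
        = (α + β) • (B * Dα⁻¹ - X) := by
      linear_combination (norm := module) -h5' - hTA
    have hstar : (T * X - (α + β) • (B * Dα⁻¹)) * Dmp⁻¹ * (1 - C * Aβ⁻¹ * X)
        = B * Dα⁻¹ - X := smul_right_injective _ hs hstar_s
    have huU : (1 - C * Aβ⁻¹ * ((T * X - (α + β) • (B * Dα⁻¹)) * Dmp⁻¹))
        * (1 - C * Aβ⁻¹ * X) = S * Dα⁻¹ := by
      rw [Matrix.sub_mul, Matrix.one_mul,
        Matrix.mul_assoc (C * Aβ⁻¹) ((T * X - (α + β) • (B * Dα⁻¹)) * Dmp⁻¹)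
          (1 - C * Aβ⁻¹ * X)]
      rw [hstar, hSd, Matrix.sub_mul, Matrix.mul_nonsing_inv _ uDα]
      simp only [Matrix.mul_sub, Matrix.mul_assoc]
      module
    have uQ : IsUnit (1 - (T * X - (α + β) • (B * Dα⁻¹)) * Dmp⁻¹ * (C * Aβ⁻¹)).det := by
      have e : (1 - (T * X - (α + β) • (B * Dα⁻¹)) * Dmp⁻¹ * (C * Aβ⁻¹)).det
          = (1 - C * Aβ⁻¹ * ((T * X - (α + β) • (B * Dα⁻¹)) * Dmp⁻¹)).det := by
        rw [det_one_sub_mul_comm]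
      rw [e]
      have hd1 : (1 - C * Aβ⁻¹ * ((T * X - (α + β) • (B * Dα⁻¹)) * Dmp⁻¹)).det
          * (1 - C * Aβ⁻¹ * X).det = S.det * Dα⁻¹.det := by
        rw [← det_mul, huU, det_mul]
      exact isUnit_of_mul_isUnit_left
        (by rw [hd1]; exact uS.mul (Matrix.isUnit_nonsing_inv_det _ uDα))
    have h6 := congrArg (fun Z => Z * (Dm - C * X)) hstar
    rw [Matrix.mul_assoc ((T * X - (α + β) • (B * Dα⁻¹)) * Dmp⁻¹)
        (1 - C * Aβ⁻¹ * X) (Dm - C * X), Id1, Matrix.mul_add,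
      Matrix.nonsing_inv_mul_cancel_right _ _ uDmp, Id2] at h6
    have hQN : (1 - (T * X - (α + β) • (B * Dα⁻¹)) * Dmp⁻¹ * (C * Aβ⁻¹)) * N = 0 := by
      rw [Matrix.sub_mul, Matrix.one_mul,
        Matrix.mul_assoc ((T * X - (α + β) • (B * Dα⁻¹)) * Dmp⁻¹) (C * Aβ⁻¹) N]
      linear_combination (norm := module) -h6
    have h7 := Matrix.nonsing_inv_mul_cancel_left
      (1 - (T * X - (α + β) • (B * Dα⁻¹)) * Dmp⁻¹ * (C * Aβ⁻¹)) N uQ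
    rw [hQN, Matrix.mul_zero] at h7
    exact h7.symm
end

section
/- Under the standing invertibility assumption (*) and α+β ≠ 0, suppose X ∈ ℂ^{m×n} is such that I − G_0 X is invertible and X satisfies the NDARE X − H_0 = F_0 X (I − G_0 X)^{−1} E_0, and set R := −(I − G_0 X)^{−1} E_0. Then (i) D_{−β} − C X = (D_α − C X) R; (ii) (D_α − C X)(R − I) = −(α+β) I; consequently D_α − C X is invertible and R = (D_α − C X)^{−1}((D − C X) − β I), i.e. R equals minus the generalized Cayley transform of D − C X. -/
open Matrix

/-- If `X` solves the NDARE (with `I − G₀ X` invertible) and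
`R = −(I − G₀ X)⁻¹ E₀`, then `D_{−β} − C X = (D_α − C X) R`,
`(D_α − C X)(R − I) = −(α+β) I`, `D_α − C X` is invertible and
`R = (D_α − C X)⁻¹ ((D − C X) − β I)`. -/
theorem ndare_normalization_is_cayley {m n : ℕ} (hm : 0 < m) (hn : 0 < n)
    (A : Matrix (Fin m) (Fin m) ℂ) (D : Matrix (Fin n) (Fin n) ℂ)
    (B : Matrix (Fin m) (Fin n) ℂ) (C : Matrix (Fin n) (Fin m) ℂ)
    (α β : ℂ) (hαβ : α + β ≠ 0)
    (hDα : IsUnit (α • (1 : Matrix (Fin n) (Fin n) ℂ) + D))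
    (hAβ : IsUnit (β • (1 : Matrix (Fin m) (Fin m) ℂ) + A))
    (hABc : IsUnit ((β • 1 + A) - B * (α • 1 + D)⁻¹ * C))
    (hAmc : IsUnit (((-α) • 1 + A) - B * (α • 1 + D)⁻¹ * C))
    (hDmc : IsUnit (((-β) • 1 + D) - C * (β • 1 + A)⁻¹ * B))
    (E₀ : Matrix (Fin n) (Fin n) ℂ)
    (F₀ : Matrix (Fin m) (Fin m) ℂ)
    (G₀ : Matrix (Fin n) (Fin m) ℂ)
    (H₀ : Matrix (Fin m) (Fin n) ℂ)
    (hE : E₀ = -((((α • 1 + D) - C * (β • 1 + A)⁻¹ * B)⁻¹) *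
      (((-β) • 1 + D) - C * (β • 1 + A)⁻¹ * B)))
    (hF : F₀ = -((((β • 1 + A) - B * (α • 1 + D)⁻¹ * C)⁻¹) *
      (((-α) • 1 + A) - B * (α • 1 + D)⁻¹ * C)))
    (hG : G₀ = (α + β) • ((((α • 1 + D) - C * (β • 1 + A)⁻¹ * B)⁻¹) * C * (β • 1 + A)⁻¹))
    (hH : H₀ = (α + β) • ((((β • 1 + A) - B * (α • 1 + D)⁻¹ * C)⁻¹) * B * (α • 1 + D)⁻¹))
    (X : Matrix (Fin m) (Fin n) ℂ)
    (hGX : IsUnit (1 - G₀ * X))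
    (hNDARE : X - H₀ = F₀ * X * (1 - G₀ * X)⁻¹ * E₀)
    (R : Matrix (Fin n) (Fin n) ℂ)
    (hR : R = -((1 - G₀ * X)⁻¹ * E₀)) :
    (((-β) • 1 + D) - C * X = ((α • 1 + D) - C * X) * R) ∧
    (((α • 1 + D) - C * X) * (R - 1) = (-(α + β)) • 1) ∧
    IsUnit ((α • 1 + D) - C * X) ∧
    R = ((α • 1 + D) - C * X)⁻¹ * ((D - C * X) - β • 1) := by
  set k : ℂ := α + β with hk
  set a : Matrix (Fin m) (Fin m) ℂ := β • 1 + A with ha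
  set d : Matrix (Fin n) (Fin n) ℂ := α • 1 + D with hd
  set t : Matrix (Fin m) (Fin m) ℂ := a - B * d⁻¹ * C with htdef
  set s : Matrix (Fin n) (Fin n) ℂ := d - C * a⁻¹ * B with hsdef
  -- basic inverse facts
  have hd1 : d * d⁻¹ = 1 := Matrix.mul_nonsing_inv d ((Matrix.isUnit_iff_isUnit_det d).mp hDα)
  have hd2 : d⁻¹ * d = 1 := Matrix.nonsing_inv_mul d ((Matrix.isUnit_iff_isUnit_det d).mp hDα)
  have ha1 : a * a⁻¹ = 1 := Matrix.mul_nonsing_inv a ((Matrix.isUnit_iff_isUnit_det a).mp hAβ)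
  have ha2 : a⁻¹ * a = 1 := Matrix.nonsing_inv_mul a ((Matrix.isUnit_iff_isUnit_det a).mp hAβ)
  have ht1 : t * t⁻¹ = 1 := Matrix.mul_nonsing_inv t ((Matrix.isUnit_iff_isUnit_det t).mp hABc)
  have ht2 : t⁻¹ * t = 1 := Matrix.nonsing_inv_mul t ((Matrix.isUnit_iff_isUnit_det t).mp hABc)
  have hphi1 : (1 - G₀ * X) * (1 - G₀ * X)⁻¹ = 1 :=
    Matrix.mul_nonsing_inv _ ((Matrix.isUnit_iff_isUnit_det _).mp hGX)
  -- the key auxiliary identity : C a⁻¹ t = C - C a⁻¹ B d⁻¹ C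
  have hIa : C * a⁻¹ * t = C - C * a⁻¹ * B * d⁻¹ * C := by
    rw [htdef, Matrix.mul_sub, Matrix.mul_assoc C a⁻¹ a, ha2, Matrix.mul_one]
    congr 1
    simp only [Matrix.mul_assoc]
  -- s is invertible, with explicit inverse d⁻¹ + d⁻¹ C t⁻¹ B d⁻¹
  have hs_right : s * (d⁻¹ + d⁻¹ * C * t⁻¹ * B * d⁻¹) = 1 := by
    have e0 : d⁻¹ * C * t⁻¹ * B * d⁻¹ = d⁻¹ * (C * (t⁻¹ * (B * d⁻¹))) := by
      simp only [Matrix.mul_assoc]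
    have e1 : s * d⁻¹ = 1 - C * a⁻¹ * B * d⁻¹ := by
      rw [hsdef, Matrix.sub_mul, hd1]
    have e2 : s * (d⁻¹ * (C * (t⁻¹ * (B * d⁻¹)))) = C * a⁻¹ * B * d⁻¹ := by
      rw [hsdef, Matrix.sub_mul, ← Matrix.mul_assoc d d⁻¹ _, hd1, Matrix.one_mul]
      have e3 : C * a⁻¹ * B * (d⁻¹ * (C * (t⁻¹ * (B * d⁻¹))))
          = (C * a⁻¹ * B * d⁻¹ * C) * (t⁻¹ * (B * d⁻¹)) := by
        simp only [Matrix.mul_assoc]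
      rw [e3, ← Matrix.sub_mul, ← hIa]
      rw [show C * a⁻¹ * t * (t⁻¹ * (B * d⁻¹)) = C * a⁻¹ * ((t * t⁻¹) * (B * d⁻¹)) by
        simp only [Matrix.mul_assoc], ht1, Matrix.one_mul, ← Matrix.mul_assoc]
    rw [Matrix.mul_add, e0, e1, e2]
    abel
  have hsU : IsUnit s := (Matrix.isUnit_iff_isUnit_det _).mpr (Matrix.isUnit_det_of_right_inverse hs_right)
  have hs1 : s * s⁻¹ = 1 := Matrix.mul_nonsing_inv s ((Matrix.isUnit_iff_isUnit_det s).mp hsU)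
  have hs2 : s⁻¹ * s = 1 := Matrix.nonsing_inv_mul s ((Matrix.isUnit_iff_isUnit_det s).mp hsU)
  -- scalar-shift normalizations
  have hdk : (-β) • (1 : Matrix (Fin n) (Fin n) ℂ) + D = d - k • 1 := by
    rw [hd, hk]
    rw [show (-β) • (1 : Matrix (Fin n) (Fin n) ℂ) = α • 1 - (α + β) • 1 by
      rw [← sub_smul]; congr 1; ring]
    abel
  have hak : (-α) • (1 : Matrix (Fin m) (Fin m) ℂ) + A = a - k • 1 := by
    rw [ha, hk]
    rw [show (-α) • (1 : Matrix (Fin m) (Fin m) ℂ) = β • 1 - (α + β) • 1 by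
      rw [← sub_smul]; congr 1; ring]
    abel
  have hsk : ((-β) • (1 : Matrix (Fin n) (Fin n) ℂ) + D) - C * a⁻¹ * B = s - k • 1 := by
    rw [hdk, hsdef]; abel
  have htk : ((-α) • (1 : Matrix (Fin m) (Fin m) ℂ) + A) - B * d⁻¹ * C = t - k • 1 := by
    rw [hak, htdef]; abel
  -- normalized forms of E₀, F₀, G₀, H₀
  have hE₀ : E₀ = k • s⁻¹ - 1 := by
    rw [hE, hsk, Matrix.mul_sub, hs2, Matrix.mul_smul, Matrix.mul_one, neg_sub]
  have hF₀ : F₀ = k • t⁻¹ - 1 := by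
    rw [hF, htk, Matrix.mul_sub, ht2, Matrix.mul_smul, Matrix.mul_one, neg_sub]
  have hG₀ : G₀ = k • (s⁻¹ * C * a⁻¹) := hG
  have hH₀ : H₀ = k • (t⁻¹ * B * d⁻¹) := hH
  -- the core Schur-complement identity:  d (s⁻¹ (C a⁻¹)) = C t⁻¹
  have step1 : C * a⁻¹ * t = s * (d⁻¹ * C) := by
    rw [hIa, hsdef, Matrix.sub_mul, ← Matrix.mul_assoc d d⁻¹ C, hd1, Matrix.one_mul]
    congr 1
    simp only [Matrix.mul_assoc]
  have step2 : C * a⁻¹ = s * (d⁻¹ * C) * t⁻¹ := by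
    rw [← step1, Matrix.mul_assoc (C * a⁻¹) t t⁻¹, ht1, Matrix.mul_one]
  have step3 : s⁻¹ * (C * a⁻¹) = d⁻¹ * C * t⁻¹ := by
    rw [step2, ← Matrix.mul_assoc s⁻¹ (s * (d⁻¹ * C)) t⁻¹, ← Matrix.mul_assoc s⁻¹ s (d⁻¹ * C),
      hs2, Matrix.one_mul]
  have dct : d * (s⁻¹ * (C * a⁻¹)) = C * t⁻¹ := by
    rw [step3, ← Matrix.mul_assoc d (d⁻¹ * C) t⁻¹, ← Matrix.mul_assoc d d⁻¹ C, hd1,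
      Matrix.one_mul]
  -- identity (1):  d * G₀ = C + C * F₀
  have id1 : d * G₀ = C + C * F₀ := by
    rw [hG₀, hF₀, Matrix.mul_smul, Matrix.mul_sub, Matrix.mul_smul, Matrix.mul_one,
      Matrix.mul_assoc s⁻¹ C a⁻¹, dct]
    abel
  -- identity (2):  d * E₀ - C * H₀ = k • 1 - d
  have id2 : d * E₀ - C * H₀ = k • 1 - d := by
    rw [hE₀, hH₀, Matrix.mul_sub, Matrix.mul_smul, Matrix.mul_one, Matrix.mul_smul]
    have c1 : C * (t⁻¹ * B * d⁻¹) = d * (s⁻¹ * (C * a⁻¹ * B * d⁻¹)) := by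
      rw [show t⁻¹ * B * d⁻¹ = t⁻¹ * (B * d⁻¹) by rw [Matrix.mul_assoc],
        ← Matrix.mul_assoc C t⁻¹ (B * d⁻¹), ← dct]
      simp only [Matrix.mul_assoc]
    have c2 : (1 : Matrix (Fin n) (Fin n) ℂ) - C * a⁻¹ * B * d⁻¹ = s * d⁻¹ := by
      rw [hsdef, Matrix.sub_mul, hd1]
    have c3 : d * s⁻¹ - C * (t⁻¹ * B * d⁻¹) = 1 := by
      rw [c1]
      have c4 : d * s⁻¹ - d * (s⁻¹ * (C * a⁻¹ * B * d⁻¹))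
          = d * (s⁻¹ * (1 - C * a⁻¹ * B * d⁻¹)) := by
        rw [Matrix.mul_sub s⁻¹, Matrix.mul_one, Matrix.mul_sub d]
      rw [c4, c2, ← Matrix.mul_assoc s⁻¹ s d⁻¹, hs2, Matrix.one_mul, hd1]
    calc k • (d * s⁻¹) - d - k • (C * (t⁻¹ * B * d⁻¹))
        = k • (d * s⁻¹ - C * (t⁻¹ * B * d⁻¹)) - d := by
          rw [smul_sub]; abel
      _ = k • 1 - d := by rw [c3]
  -- consequences of the NDARE and the definition of R
  have h' : F₀ * X * (1 - G₀ * X)⁻¹ * E₀ = -(F₀ * (X * R)) := by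
    rw [hR]
    simp only [Matrix.mul_neg, neg_neg, Matrix.mul_assoc]
  have hn1 : F₀ * (X * R) = H₀ - X := by
    rw [← neg_sub X H₀, hNDARE, h', neg_neg]
  have h2 : (1 - G₀ * X) * R = -E₀ := by
    rw [hR, Matrix.mul_neg, ← Matrix.mul_assoc, hphi1, Matrix.one_mul]
  have hn2 : G₀ * (X * R) = R + E₀ := by
    have h3 : R - G₀ * (X * R) = -E₀ := by
      rw [← h2, Matrix.sub_mul, Matrix.one_mul, Matrix.mul_assoc]
    calc G₀ * (X * R) = R - (R - G₀ * (X * R)) := by abel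
      _ = R - -E₀ := by rw [h3]
      _ = R + E₀ := by rw [sub_neg_eq_add]
  -- the main computation:  (d - C X) R = (d - C X) - k • 1
  have key : (d - C * X) * R = (d - C * X) - k • 1 := by
    have t1 : d * R + d * E₀ = C * (X * R) + (C * H₀ - C * X) := by
      calc d * R + d * E₀ = d * (R + E₀) := by rw [Matrix.mul_add]
        _ = d * (G₀ * (X * R)) := by rw [hn2]
        _ = (d * G₀) * (X * R) := by rw [Matrix.mul_assoc]
        _ = (C + C * F₀) * (X * R) := by rw [id1]
        _ = C * (X * R) + C * (F₀ * (X * R)) := by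
            rw [Matrix.add_mul, Matrix.mul_assoc C F₀ (X * R)]
        _ = C * (X * R) + (C * H₀ - C * X) := by rw [hn1, Matrix.mul_sub]
    have t5 : (d - C * X) * R = d * R - C * (X * R) := by
      rw [Matrix.sub_mul, Matrix.mul_assoc]
    have t6 : d * R - C * (X * R) = C * H₀ - C * X - d * E₀ := by
      calc d * R - C * (X * R)
          = (d * R + d * E₀) - C * (X * R) - d * E₀ := by abel
        _ = (C * (X * R) + (C * H₀ - C * X)) - C * (X * R) - d * E₀ := by rw [t1]
        _ = C * H₀ - C * X - d * E₀ := by abel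
    have t7 : C * H₀ - d * E₀ = d - k • 1 := by
      calc C * H₀ - d * E₀ = -(d * E₀ - C * H₀) := by abel
        _ = -(k • 1 - d) := by rw [id2]
        _ = d - k • 1 := by abel
    calc (d - C * X) * R = d * R - C * (X * R) := t5
      _ = C * H₀ - C * X - d * E₀ := t6
      _ = (C * H₀ - d * E₀) - C * X := by abel
      _ = (d - k • 1) - C * X := by rw [t7]
      _ = (d - C * X) - k • 1 := by abel
  -- assemble the four statements
  have goal1 : ((-β) • 1 + D) - C * X = (d - C * X) * R := by
    rw [key, hdk]; abel
  have goal2 : (d - C * X) * (R - 1) = (-k) • 1 := by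
    rw [Matrix.mul_sub, Matrix.mul_one, key, neg_smul]
    abel
  have goal3 : IsUnit (d - C * X) := by
    have hinv : (d - C * X) * ((-k)⁻¹ • (R - 1)) = 1 := by
      rw [Matrix.mul_smul, goal2, smul_smul, inv_mul_cancel₀ (neg_ne_zero.mpr hαβ), one_smul]
    exact (Matrix.isUnit_iff_isUnit_det _).mpr (Matrix.isUnit_det_of_right_inverse hinv)
  have goal4 : R = (d - C * X)⁻¹ * ((D - C * X) - β • 1) := by
    have hu2 : (d - C * X)⁻¹ * (d - C * X) = 1 :=
      Matrix.nonsing_inv_mul _ ((Matrix.isUnit_iff_isUnit_det _).mp goal3)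
    have e : (D - C * X) - β • 1 = (d - C * X) - k • 1 := by
      rw [hd, hk]
      rw [show β • (1 : Matrix (Fin n) (Fin n) ℂ) = (α + β) • 1 - α • 1 by
        rw [← sub_smul]; congr 1; ring]
      abel
    rw [e, ← key, ← Matrix.mul_assoc, hu2, Matrix.one_mul]
  exact ⟨goal1, goal2, goal3, goal4⟩
end

section
/- Let T be the block matrix product T = [[I, D_α^{−1}C],[0, I]] · [[I, 0],[0, −(A_β − B D_α^{−1} C)^{−1}]] · [[D_α^{−1}, 0],[−B D_α^{−1}, I]]. Then T · [[D_{−β}, −C],[B, −A_β]] = [[−E_0, 0],[−H_0, I]] and T · [[D_α, −C],[B, −A_{−α}]] = [[I, −G_0],[0, −F_0]]. -/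
open Matrix

/-- The block elementary transformation `T` maps the pencil
`(H − βI, H + αI)` (written in the displayed block forms) to the simplified block forms
involving `E₀, F₀, G₀, H₀`. -/
theorem block_transformation_simplifies_pencil {m n : ℕ} (hm : 0 < m) (hn : 0 < n)
    (A : Matrix (Fin m) (Fin m) ℂ) (D : Matrix (Fin n) (Fin n) ℂ)
    (B : Matrix (Fin m) (Fin n) ℂ) (C : Matrix (Fin n) (Fin m) ℂ)
    (α β : ℂ)
    (hDα : IsUnit (α • (1 : Matrix (Fin n) (Fin n) ℂ) + D))
    (hAβ : IsUnit (β • (1 : Matrix (Fin m) (Fin m) ℂ) + A))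
    (hABc : IsUnit ((β • 1 + A) - B * (α • 1 + D)⁻¹ * C))
    (hDAc : IsUnit ((α • 1 + D) - C * (β • 1 + A)⁻¹ * B))
    (E₀ : Matrix (Fin n) (Fin n) ℂ)
    (F₀ : Matrix (Fin m) (Fin m) ℂ)
    (G₀ : Matrix (Fin n) (Fin m) ℂ)
    (H₀ : Matrix (Fin m) (Fin n) ℂ)
    (hE : E₀ = -((((α • 1 + D) - C * (β • 1 + A)⁻¹ * B)⁻¹) *
      (((-β) • 1 + D) - C * (β • 1 + A)⁻¹ * B)))
    (hF : F₀ = -((((β • 1 + A) - B * (α • 1 + D)⁻¹ * C)⁻¹) *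
      (((-α) • 1 + A) - B * (α • 1 + D)⁻¹ * C)))
    (hG : G₀ = (α + β) • ((((α • 1 + D) - C * (β • 1 + A)⁻¹ * B)⁻¹) * C * (β • 1 + A)⁻¹))
    (hH : H₀ = (α + β) • ((((β • 1 + A) - B * (α • 1 + D)⁻¹ * C)⁻¹) * B * (α • 1 + D)⁻¹))
    (T : Matrix (Fin n ⊕ Fin m) (Fin n ⊕ Fin m) ℂ)
    (hT : T = fromBlocks 1 ((α • 1 + D)⁻¹ * C) 0 1 *
      fromBlocks 1 0 0 (-(((β • 1 + A) - B * (α • 1 + D)⁻¹ * C)⁻¹)) *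
      fromBlocks ((α • 1 + D)⁻¹) 0 (-(B * (α • 1 + D)⁻¹)) 1) :
    T * fromBlocks ((-β) • 1 + D) (-C) B (-(β • 1 + A)) = fromBlocks (-E₀) 0 (-H₀) 1 ∧
    T * fromBlocks (α • 1 + D) (-C) B (-((-α) • 1 + A)) = fromBlocks 1 (-G₀) 0 (-F₀) := by
  set Dα : Matrix (Fin n) (Fin n) ℂ := α • 1 + D with hDαd
  set Aβ : Matrix (Fin m) (Fin m) ℂ := β • 1 + A with hAβd
  set S : Matrix (Fin m) (Fin m) ℂ := Aβ - B * Dα⁻¹ * C with hSd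
  set W : Matrix (Fin n) (Fin n) ℂ := Dα - C * Aβ⁻¹ * B with hWd
  have hdD := (Matrix.isUnit_iff_isUnit_det _).mp hDα
  have hdA := (Matrix.isUnit_iff_isUnit_det _).mp hAβ
  have hdS := (Matrix.isUnit_iff_isUnit_det _).mp hABc
  have hdW := (Matrix.isUnit_iff_isUnit_det _).mp hDAc
  have hDβ : (-β) • (1 : Matrix (Fin n) (Fin n) ℂ) + D = Dα - (α + β) • 1 := by
    rw [hDαd]; module
  have hAα : (-α) • (1 : Matrix (Fin m) (Fin m) ℂ) + A = Aβ - (α + β) • 1 := by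
    rw [hAβd]; module
  have hBDC : ∀ {p : ℕ} (X : Matrix (Fin m) (Fin p) ℂ),
      B * (Dα⁻¹ * (C * X)) = Aβ * X - S * X := by
    intro p X
    rw [hSd, Matrix.sub_mul, sub_sub_cancel]
    simp only [Matrix.mul_assoc]
  have hBDC0 : B * (Dα⁻¹ * C) = Aβ - S := by
    rw [hSd, sub_sub_cancel, Matrix.mul_assoc]
  have hL1 : W⁻¹ = Dα⁻¹ + Dα⁻¹ * C * S⁻¹ * (B * Dα⁻¹) := by
    refine Matrix.inv_eq_right_inv ?_
    rw [hWd]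
    simp only [Matrix.mul_sub, Matrix.sub_mul, Matrix.mul_add, Matrix.add_mul,
      Matrix.mul_assoc, Matrix.mul_one, Matrix.one_mul, Matrix.mul_neg, Matrix.neg_mul,
      Matrix.mul_smul, Matrix.smul_mul, hBDC, hBDC0,
      Matrix.mul_nonsing_inv, Matrix.nonsing_inv_mul,
      Matrix.mul_nonsing_inv_cancel_left, Matrix.nonsing_inv_mul_cancel_left,
      hdD, hdA, hdS, hdW, smul_sub, smul_add]
    abel
  subst hT hE hF hG hH
  rw [Matrix.fromBlocks_multiply, Matrix.fromBlocks_multiply, Matrix.fromBlocks_multiply,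
    Matrix.fromBlocks_multiply]
  constructor <;>
  · rw [Matrix.fromBlocks_inj]
    refine ⟨?_, ?_, ?_, ?_⟩ <;>
    · simp only [Matrix.mul_one, Matrix.one_mul, Matrix.mul_zero, Matrix.zero_mul,
        add_zero, zero_add, Matrix.neg_mul, Matrix.mul_neg, neg_neg, hL1, hDβ, hAα]
      simp only [Matrix.mul_sub, Matrix.sub_mul, Matrix.mul_add, Matrix.add_mul,
        Matrix.mul_assoc, Matrix.mul_one, Matrix.one_mul, Matrix.mul_neg, Matrix.neg_mul,
        Matrix.mul_smul, Matrix.smul_mul, hBDC, hBDC0,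
        Matrix.mul_nonsing_inv, Matrix.nonsing_inv_mul,
        Matrix.mul_nonsing_inv_cancel_left, Matrix.nonsing_inv_mul_cancel_left,
        hdD, hdA, hdS, hdW, smul_sub, smul_add]
      abel
end

section
/- Suppose X_t ∈ ℂ^{m×n} is such that I − G_0 X_t is invertible, and set X_{t+1} := H_0 + F_0 X_t (I − G_0 X_t)^{−1} E_0 and R_t := −(I − G_0 X_t)^{−1} E_0. Then, with H = [[D, −C],[B, −A]] ∈ ℂ^{(n+m)×(n+m)}, the fixed-point step is one step of a (normalized) power iteration on the inverse generalized Cayley transform of H: (βI − H) · [I_n; X_{t+1}] = −(αI + H) · [I_n; X_t] · R_t, where [I_n; X] denotes the (n+m)×n matrix with upper block I_n and lower block X. -/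
open Matrix

/-- Auxiliary: if `P * U = V * Q` with `P, Q` invertible then `U * Q⁻¹ = P⁻¹ * V`. -/
lemma aux_swap_inv {k l : ℕ} (P : Matrix (Fin k) (Fin k) ℂ) (Q : Matrix (Fin l) (Fin l) ℂ)
    (U V : Matrix (Fin k) (Fin l) ℂ) (hP : IsUnit P) (hQ : IsUnit Q)
    (h : P * U = V * Q) : U * Q⁻¹ = P⁻¹ * V := by
  have hPd : IsUnit P.det := (Matrix.isUnit_iff_isUnit_det _).mp hP
  have hQd : IsUnit Q.det := (Matrix.isUnit_iff_isUnit_det _).mp hQ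
  calc U * Q⁻¹ = P⁻¹ * (P * U) * Q⁻¹ := by
        rw [← Matrix.mul_assoc, Matrix.nonsing_inv_mul _ hPd, Matrix.one_mul]
    _ = P⁻¹ * V * (Q * Q⁻¹) := by rw [h, Matrix.mul_assoc, Matrix.mul_assoc, Matrix.mul_assoc]
    _ = P⁻¹ * V := by rw [Matrix.mul_nonsing_inv _ hQd, Matrix.mul_one]

/-- One step of the fixed-point iteration is a normalized power-iteration step
on the inverse generalized Cayley transform of `H = [[D, −C],[B, −A]]`:
`(βI − H)·[I; X_{t+1}] = −(αI + H)·[I; X_t]·R_t`. -/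
theorem fixedpoint_step_is_power_iteration {m n : ℕ} (hm : 0 < m) (hn : 0 < n)
    (A : Matrix (Fin m) (Fin m) ℂ) (D : Matrix (Fin n) (Fin n) ℂ)
    (B : Matrix (Fin m) (Fin n) ℂ) (C : Matrix (Fin n) (Fin m) ℂ)
    (α β : ℂ)
    (hDα : IsUnit (α • (1 : Matrix (Fin n) (Fin n) ℂ) + D))
    (hAβ : IsUnit (β • (1 : Matrix (Fin m) (Fin m) ℂ) + A))
    (hABc : IsUnit ((β • 1 + A) - B * (α • 1 + D)⁻¹ * C))
    (hDAc : IsUnit ((α • 1 + D) - C * (β • 1 + A)⁻¹ * B))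
    (E₀ : Matrix (Fin n) (Fin n) ℂ)
    (F₀ : Matrix (Fin m) (Fin m) ℂ)
    (G₀ : Matrix (Fin n) (Fin m) ℂ)
    (H₀ : Matrix (Fin m) (Fin n) ℂ)
    (hE : E₀ = -((((α • 1 + D) - C * (β • 1 + A)⁻¹ * B)⁻¹) *
      (((-β) • 1 + D) - C * (β • 1 + A)⁻¹ * B)))
    (hF : F₀ = -((((β • 1 + A) - B * (α • 1 + D)⁻¹ * C)⁻¹) *
      (((-α) • 1 + A) - B * (α • 1 + D)⁻¹ * C)))
    (hG : G₀ = (α + β) • ((((α • 1 + D) - C * (β • 1 + A)⁻¹ * B)⁻¹) * C * (β • 1 + A)⁻¹))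
    (hH : H₀ = (α + β) • ((((β • 1 + A) - B * (α • 1 + D)⁻¹ * C)⁻¹) * B * (α • 1 + D)⁻¹))
    (Xt : Matrix (Fin m) (Fin n) ℂ)
    (hXt : IsUnit (1 - G₀ * Xt))
    (Xt1 : Matrix (Fin m) (Fin n) ℂ)
    (hXt1 : Xt1 = H₀ + F₀ * Xt * (1 - G₀ * Xt)⁻¹ * E₀)
    (Rt : Matrix (Fin n) (Fin n) ℂ)
    (hRt : Rt = -((1 - G₀ * Xt)⁻¹ * E₀)) :
    (β • 1 - fromBlocks D (-C) B (-A)) * fromRows (1 : Matrix (Fin n) (Fin n) ℂ) Xt1 =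
      -((α • 1 + fromBlocks D (-C) B (-A)) * fromRows (1 : Matrix (Fin n) (Fin n) ℂ) Xt * Rt) := by
  set Dα : Matrix (Fin n) (Fin n) ℂ := α • 1 + D with hDαdef
  set Aβ : Matrix (Fin m) (Fin m) ℂ := β • 1 + A with hAβdef
  set S : Matrix (Fin n) (Fin n) ℂ := Dα - C * Aβ⁻¹ * B with hSdef
  set T : Matrix (Fin m) (Fin m) ℂ := Aβ - B * Dα⁻¹ * C with hTdef
  have hDαd : IsUnit Dα.det := (Matrix.isUnit_iff_isUnit_det _).mp hDα
  have hAβd : IsUnit Aβ.det := (Matrix.isUnit_iff_isUnit_det _).mp hAβ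
  have hSd : IsUnit S.det := (Matrix.isUnit_iff_isUnit_det _).mp hDAc
  have hTd : IsUnit T.det := (Matrix.isUnit_iff_isUnit_det _).mp hABc
  have hKd : IsUnit (1 - G₀ * Xt).det := (Matrix.isUnit_iff_isUnit_det _).mp hXt
  have hDα1 : Dα * Dα⁻¹ = 1 := Matrix.mul_nonsing_inv _ hDαd
  have hDα2 : Dα⁻¹ * Dα = 1 := Matrix.nonsing_inv_mul _ hDαd
  have hAβ1 : Aβ * Aβ⁻¹ = 1 := Matrix.mul_nonsing_inv _ hAβd
  have hAβ2 : Aβ⁻¹ * Aβ = 1 := Matrix.nonsing_inv_mul _ hAβd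
  have hS1 : S * S⁻¹ = 1 := Matrix.mul_nonsing_inv _ hSd
  have hS2 : S⁻¹ * S = 1 := Matrix.nonsing_inv_mul _ hSd
  have hT1 : T * T⁻¹ = 1 := Matrix.mul_nonsing_inv _ hTd
  have hT2 : T⁻¹ * T = 1 := Matrix.nonsing_inv_mul _ hTd
  -- the push-through identities
  have push1 : (Aβ⁻¹ * B) * S⁻¹ = T⁻¹ * (B * Dα⁻¹) := by
    apply aux_swap_inv _ _ _ _ hABc hDAc
    rw [hTdef, hSdef]
    simp only [Matrix.sub_mul, Matrix.mul_sub, Matrix.mul_assoc]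
    rw [← Matrix.mul_assoc Aβ, hAβ1, Matrix.one_mul, hDα2, Matrix.mul_one]
  have push2 : (Dα⁻¹ * C) * T⁻¹ = S⁻¹ * (C * Aβ⁻¹) := by
    apply aux_swap_inv _ _ _ _ hDAc hABc
    rw [hSdef, hTdef]
    simp only [Matrix.sub_mul, Matrix.mul_sub, Matrix.mul_assoc]
    rw [← Matrix.mul_assoc Dα, hDα1, Matrix.one_mul, hAβ2, Matrix.mul_one]
  have assoc1 : T⁻¹ * B * Dα⁻¹ = Aβ⁻¹ * B * S⁻¹ := by
    rw [Matrix.mul_assoc T⁻¹, ← push1]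
  have assoc2 : S⁻¹ * C * Aβ⁻¹ = Dα⁻¹ * C * T⁻¹ := by
    rw [Matrix.mul_assoc S⁻¹, ← push2]
  -- closed forms of E₀ and F₀
  have hE2 : E₀ = (α + β) • S⁻¹ - 1 := by
    have h0 : ((-β) • (1 : Matrix (Fin n) (Fin n) ℂ) + D) - C * Aβ⁻¹ * B
        = S - (α + β) • 1 := by
      rw [hSdef, hDαdef]; module
    rw [hE, h0, Matrix.mul_sub, hS2, Matrix.mul_smul, Matrix.mul_one, neg_sub]
  have hF2 : F₀ = (α + β) • T⁻¹ - 1 := by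
    have h0 : ((-α) • (1 : Matrix (Fin m) (Fin m) ℂ) + A) - B * Dα⁻¹ * C
        = T - (α + β) • 1 := by
      rw [hTdef, hAβdef]; module
    rw [hF, h0, Matrix.mul_sub, hT2, Matrix.mul_smul, Matrix.mul_one, neg_sub]
  have hDS : Dα * S⁻¹ = 1 + C * Aβ⁻¹ * B * S⁻¹ := by
    have h0 : Dα = S + C * Aβ⁻¹ * B := by rw [hSdef]; abel
    rw [h0, Matrix.add_mul, hS1]
  have hAT : Aβ * T⁻¹ = 1 + B * Dα⁻¹ * C * T⁻¹ := by
    have h0 : Aβ = T + B * Dα⁻¹ * C := by rw [hTdef]; abel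
    rw [h0, Matrix.add_mul, hT1]
  -- four structural identities
  have id_i : β • (1 : Matrix (Fin n) (Fin n) ℂ) - D + C * H₀ = Dα * E₀ := by
    rw [hE2, hH, Matrix.mul_sub, Matrix.mul_smul Dα, hDS, Matrix.mul_one,
      Matrix.mul_smul C, assoc1, hDαdef]
    simp only [Matrix.mul_assoc]
    module
  have id_ii : Dα * G₀ = C + C * F₀ := by
    rw [hG, hF2, Matrix.mul_smul, assoc2]
    rw [show Dα * (Dα⁻¹ * C * T⁻¹) = C * T⁻¹ by
      rw [← Matrix.mul_assoc Dα, ← Matrix.mul_assoc Dα, hDα1, Matrix.one_mul]]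
    rw [Matrix.mul_sub, Matrix.mul_smul, Matrix.mul_one]
    abel
  have id_iii : -B + Aβ * H₀ = B * E₀ := by
    rw [hE2, hH, Matrix.mul_smul, assoc1]
    rw [show Aβ * (Aβ⁻¹ * B * S⁻¹) = B * S⁻¹ by
      rw [← Matrix.mul_assoc Aβ, ← Matrix.mul_assoc Aβ, hAβ1, Matrix.one_mul]]
    rw [Matrix.mul_sub, Matrix.mul_smul, Matrix.mul_one]
    abel
  have id_iv : Aβ * F₀ = B * G₀ + (α • 1 - A) := by
    rw [hF2, hG, Matrix.mul_sub, Matrix.mul_smul Aβ, hAT, Matrix.mul_one,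
      Matrix.mul_smul B, assoc2, hAβdef]
    simp only [Matrix.mul_assoc]
    module
  -- the vector Y and its fixed-point relation
  set Y : Matrix (Fin n) (Fin n) ℂ := (1 - G₀ * Xt)⁻¹ * E₀ with hYdef
  have hY : Y = E₀ + G₀ * (Xt * Y) := by
    have h0 : (1 - G₀ * Xt) * Y = E₀ := by
      rw [hYdef, ← Matrix.mul_assoc, Matrix.mul_nonsing_inv _ hKd, Matrix.one_mul]
    have h1 : Y - G₀ * (Xt * Y) = E₀ := by
      rw [← h0, Matrix.sub_mul, Matrix.one_mul, Matrix.mul_assoc]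
    rw [← h1]; abel
  have hXt1' : Xt1 = H₀ + F₀ * (Xt * Y) := by
    rw [hXt1, hYdef]; simp only [Matrix.mul_assoc]
  have hRt' : Rt = -Y := by rw [hRt, hYdef]
  -- the two component equations
  have eqTop : β • (1 : Matrix (Fin n) (Fin n) ℂ) - D + C * Xt1 = (Dα - C * Xt) * Y := by
    have e1 : β • (1 : Matrix (Fin n) (Fin n) ℂ) - D + C * Xt1
        = Dα * E₀ + C * F₀ * (Xt * Y) := by
      rw [hXt1', ← id_i]
      simp only [Matrix.mul_add, Matrix.mul_assoc]
      abel
    have hDY : Dα * Y = Dα * (E₀ + G₀ * (Xt * Y)) := congrArg (Dα * ·) hY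
    have e2 : (Dα - C * Xt) * Y = Dα * E₀ + C * F₀ * (Xt * Y) := by
      calc (Dα - C * Xt) * Y = Dα * Y - C * (Xt * Y) := by
            rw [Matrix.sub_mul, Matrix.mul_assoc]
        _ = Dα * (E₀ + G₀ * (Xt * Y)) - C * (Xt * Y) := by rw [hDY]
        _ = Dα * E₀ + Dα * G₀ * (Xt * Y) - C * (Xt * Y) := by
            rw [Matrix.mul_add, ← Matrix.mul_assoc Dα G₀ (Xt * Y)]
        _ = Dα * E₀ + (C + C * F₀) * (Xt * Y) - C * (Xt * Y) := by rw [id_ii]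
        _ = Dα * E₀ + C * F₀ * (Xt * Y) := by rw [Matrix.add_mul C (C * F₀) (Xt * Y)]; abel
    rw [e1, e2]
  have eqBot : -B + Aβ * Xt1 = (B + (α • 1 - A) * Xt) * Y := by
    have e1 : -B + Aβ * Xt1 = B * E₀ + Aβ * F₀ * (Xt * Y) := by
      rw [hXt1', ← id_iii]
      simp only [Matrix.mul_add, Matrix.mul_assoc]
      abel
    have hBY : B * Y = B * (E₀ + G₀ * (Xt * Y)) := congrArg (B * ·) hY
    have e2 : (B + (α • 1 - A) * Xt) * Y = B * E₀ + Aβ * F₀ * (Xt * Y) := by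
      calc (B + (α • 1 - A) * Xt) * Y = B * Y + (α • 1 - A) * (Xt * Y) := by
            rw [Matrix.add_mul, Matrix.mul_assoc]
        _ = B * (E₀ + G₀ * (Xt * Y)) + (α • 1 - A) * (Xt * Y) := by rw [hBY]
        _ = B * E₀ + (B * G₀ + (α • 1 - A)) * (Xt * Y) := by
            rw [Matrix.mul_add, Matrix.add_mul, ← Matrix.mul_assoc B G₀ (Xt * Y)]
            abel
        _ = B * E₀ + Aβ * F₀ * (Xt * Y) := by rw [← id_iv]
    rw [e1, e2]
  -- assemble the block identity
  have h1 : (1 : Matrix (Fin n ⊕ Fin m) (Fin n ⊕ Fin m) ℂ)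
      = fromBlocks 1 0 0 1 := (fromBlocks_one).symm
  simp only [hRt', sub_eq_add_neg, h1, Matrix.fromBlocks_smul, Matrix.fromBlocks_neg,
    Matrix.fromBlocks_add, Matrix.fromBlocks_mul_fromRows,
    Matrix.fromRows_mul, Matrix.fromRows_neg, smul_zero, add_zero, zero_add, neg_neg]
  rw [Matrix.fromRows_ext_iff]
  constructor
  · simp only [Matrix.mul_one, neg_neg, Matrix.neg_mul, Matrix.mul_neg, smul_zero,
      add_zero, zero_add]
    rw [← sub_eq_add_neg, ← sub_eq_add_neg]
    exact eqTop
  · simp only [Matrix.mul_one, neg_neg, Matrix.neg_mul, Matrix.mul_neg, smul_zero,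
      add_zero, zero_add]
    rw [← sub_eq_add_neg]
    exact eqBot
end

section
/- Let X★, X' ∈ ℂ^{m×n} be such that I − G_0 X★ and I − G_0 X' are invertible, suppose X★ satisfies the NDARE X★ − H_0 = F_0 X★ (I − G_0 X★)^{−1} E_0, and set X'' := H_0 + F_0 X' (I − G_0 X')^{−1} E_0 and R := −(I − G_0 X★)^{−1} E_0. Then I − X' G_0 is invertible and X★ − X'' = −F_0 (I − X' G_0)^{−1} (X★ − X') R. -/
open Matrix

/-- One-step error formula for the fixed-point iteration:
if `X★` is a fixed point and `X'' = H₀ + F₀ X' (I − G₀ X')⁻¹ E₀`, then `I − X' G₀` is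
invertible and `X★ − X'' = −F₀ (I − X' G₀)⁻¹ (X★ − X') R`. -/
theorem fixedpoint_one_step_error {m n : ℕ} (hm : 0 < m) (hn : 0 < n)
    (E₀ : Matrix (Fin n) (Fin n) ℂ) (F₀ : Matrix (Fin m) (Fin m) ℂ)
    (G₀ : Matrix (Fin n) (Fin m) ℂ) (H₀ : Matrix (Fin m) (Fin n) ℂ)
    (Xstar X' : Matrix (Fin m) (Fin n) ℂ)
    (hXstar : IsUnit (1 - G₀ * Xstar)) (hX' : IsUnit (1 - G₀ * X'))
    (hfix : Xstar - H₀ = F₀ * Xstar * (1 - G₀ * Xstar)⁻¹ * E₀)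
    (X'' : Matrix (Fin m) (Fin n) ℂ)
    (hX'' : X'' = H₀ + F₀ * X' * (1 - G₀ * X')⁻¹ * E₀)
    (R : Matrix (Fin n) (Fin n) ℂ)
    (hR : R = -((1 - G₀ * Xstar)⁻¹ * E₀)) :
    IsUnit (1 - X' * G₀) ∧
      Xstar - X'' = -(F₀ * (1 - X' * G₀)⁻¹ * (Xstar - X') * R) := by
  have hU : IsUnit (1 - X' * G₀) := by
    rw [Matrix.isUnit_iff_isUnit_det] at hX' ⊢
    have hdet : (1 - X' * G₀).det = (1 - G₀ * X').det := by
      have h := Matrix.det_one_add_mul_comm (-X') G₀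
      simpa [sub_eq_add_neg, Matrix.neg_mul, Matrix.mul_neg] using h
    rwa [hdet]
  refine ⟨hU, ?_⟩
  have hUd := (Matrix.isUnit_iff_isUnit_det _).mp hU
  have hVd := (Matrix.isUnit_iff_isUnit_det _).mp hXstar
  have hWd := (Matrix.isUnit_iff_isUnit_det _).mp hX'
  have hWinv := Matrix.mul_nonsing_inv _ hWd
  have hVinv := Matrix.mul_nonsing_inv _ hVd
  have hUinv := Matrix.nonsing_inv_mul _ hUd
  set A := Xstar * (1 - G₀ * Xstar)⁻¹ with hA
  set B := X' * (1 - G₀ * X')⁻¹ with hB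
  have h1 : (1 - X' * G₀) * B = X' := by
    have e1 : (1 - X' * G₀) * X' = X' * (1 - G₀ * X') := by
      simp [Matrix.sub_mul, Matrix.mul_sub, Matrix.mul_assoc]
    calc (1 - X' * G₀) * B = ((1 - X' * G₀) * X') * (1 - G₀ * X')⁻¹ := by
          rw [hB, Matrix.mul_assoc]
      _ = X' * ((1 - G₀ * X') * (1 - G₀ * X')⁻¹) := by rw [e1, Matrix.mul_assoc]
      _ = X' := by rw [hWinv, Matrix.mul_one]
  have step1 : (1 - X' * G₀) * (A - B) = (Xstar - X') * (1 - G₀ * Xstar)⁻¹ := by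
    have e2 : (1 - X' * G₀) * Xstar - X' * (1 - G₀ * Xstar) = Xstar - X' := by
      simp [Matrix.sub_mul, Matrix.mul_sub, Matrix.mul_assoc]
    calc (1 - X' * G₀) * (A - B)
        = ((1 - X' * G₀) * Xstar) * (1 - G₀ * Xstar)⁻¹ - X' := by
          rw [Matrix.mul_sub, h1, hA, Matrix.mul_assoc]
      _ = ((1 - X' * G₀) * Xstar) * (1 - G₀ * Xstar)⁻¹
            - (X' * (1 - G₀ * Xstar)) * (1 - G₀ * Xstar)⁻¹ := by
          rw [Matrix.mul_assoc X' _ _, hVinv, Matrix.mul_one]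
      _ = ((1 - X' * G₀) * Xstar - X' * (1 - G₀ * Xstar)) * (1 - G₀ * Xstar)⁻¹ := by
          rw [← Matrix.sub_mul]
      _ = (Xstar - X') * (1 - G₀ * Xstar)⁻¹ := by rw [e2]
  have key : A - B = (1 - X' * G₀)⁻¹ * ((Xstar - X') * (1 - G₀ * Xstar)⁻¹) := by
    rw [← step1, ← Matrix.mul_assoc, hUinv, Matrix.one_mul]
  have hsub : Xstar - X'' = F₀ * (A - B) * E₀ := by
    have h2 : Xstar - X'' = (Xstar - H₀) - F₀ * X' * (1 - G₀ * X')⁻¹ * E₀ := by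
      rw [hX'']; abel
    rw [h2, hfix, hA, hB, Matrix.mul_sub, Matrix.sub_mul]
    simp [Matrix.mul_assoc]
  rw [hsub, key, hR]
  simp [Matrix.mul_assoc, Matrix.mul_neg, Matrix.neg_mul]
end

section
/- Let X★, X' ∈ ℂ^{m×n} with I − G_0 X★ and I − G_0 X' invertible, X★ satisfying X★ − H_0 = F_0 X★ (I − G_0 X★)^{−1} E_0, and X'' := H_0 + F_0 X' (I − G_0 X')^{−1} E_0, R := −(I − G_0 X★)^{−1} E_0. Let Y★ ∈ ℂ^{n×m} be such that I − H_0 Y★ is invertible and Y★ = G_0 + E_0 Y★ (I − H_0 Y★)^{−1} F_0, and set S := −(I − H_0 Y★)^{−1} F_0. If I − X' Y★ is invertible, then I − X'' Y★ is invertible and (I − X'' Y★)^{−1}(X★ − X'') = S (I − X' Y★)^{−1}(X★ − X') R. -/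
open Matrix

private lemma swap_isUnit {m n : ℕ} (A : Matrix (Fin m) (Fin n) ℂ) (B : Matrix (Fin n) (Fin m) ℂ)
    (h : IsUnit (1 - A * B)) : IsUnit (1 - B * A) := by
  have hd := (Matrix.isUnit_iff_isUnit_det _).mp h
  have h1 : (1 - A * B) * (1 - A * B)⁻¹ = 1 := Matrix.mul_nonsing_inv _ hd
  have h2 : (1 - A * B)⁻¹ * (1 - A * B) = 1 := Matrix.nonsing_inv_mul _ hd
  set W := (1 - A * B)⁻¹ with hW
  have key1 : B * W * A - B * A * (B * W * A) = B * A := by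
    have e : B * W * A - B * A * (B * W * A) = B * ((1 - A * B) * W) * A := by
      simp only [Matrix.sub_mul, Matrix.mul_sub, Matrix.one_mul, Matrix.mul_one,
        Matrix.mul_assoc]
    rw [e, h1, Matrix.mul_one]
  have key2 : B * W * A - B * W * A * (B * A) = B * A := by
    have e : B * W * A - B * W * A * (B * A) = B * (W * (1 - A * B)) * A := by
      simp only [Matrix.sub_mul, Matrix.mul_sub, Matrix.one_mul, Matrix.mul_one,
        Matrix.mul_assoc]
    rw [e, h2, Matrix.mul_one]
  have h3 : (1 - B * A) * (1 + B * W * A) = 1 := by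
    have expand : (1 - B * A) * (1 + B * W * A)
        = 1 + ((B * W * A - B * A * (B * W * A)) - B * A) := by
      simp only [Matrix.sub_mul, Matrix.mul_add, Matrix.one_mul, Matrix.mul_one]
      abel
    rw [expand, key1, sub_self, add_zero]
  have h4 : (1 + B * W * A) * (1 - B * A) = 1 := by
    have expand : (1 + B * W * A) * (1 - B * A)
        = 1 + ((B * W * A - B * W * A * (B * A)) - B * A) := by
      simp only [Matrix.add_mul, Matrix.mul_sub, Matrix.one_mul, Matrix.mul_one]
      abel
    rw [expand, key2, sub_self, add_zero]
  exact ⟨⟨1 - B * A, 1 + B * W * A, h3, h4⟩, rfl⟩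

private lemma shift_inv {m n : ℕ} (X : Matrix (Fin m) (Fin n) ℂ) (G : Matrix (Fin n) (Fin m) ℂ)
    (h1 : IsUnit (1 - G * X)) :
    X * (1 - G * X)⁻¹ = (1 - X * G)⁻¹ * X := by
  have h2 : IsUnit (1 - X * G) := swap_isUnit G X h1
  have hd1 := (Matrix.isUnit_iff_isUnit_det _).mp h1
  have hd2 := (Matrix.isUnit_iff_isUnit_det _).mp h2
  have comm : (1 - X * G) * X = X * (1 - G * X) := by
    simp only [Matrix.sub_mul, Matrix.mul_sub, Matrix.one_mul, Matrix.mul_one, Matrix.mul_assoc]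
  calc X * (1 - G * X)⁻¹
      = ((1 - X * G)⁻¹ * (1 - X * G)) * (X * (1 - G * X)⁻¹) := by
        rw [Matrix.nonsing_inv_mul _ hd2, Matrix.one_mul]
    _ = (1 - X * G)⁻¹ * (((1 - X * G) * X) * (1 - G * X)⁻¹) := by
        simp only [Matrix.mul_assoc]
    _ = (1 - X * G)⁻¹ * (X * ((1 - G * X) * (1 - G * X)⁻¹)) := by
        rw [comm, Matrix.mul_assoc]
    _ = (1 - X * G)⁻¹ * X := by rw [Matrix.mul_nonsing_inv _ hd1, Matrix.mul_one]

private lemma cancel_left {p q : ℕ} (L : Matrix (Fin p) (Fin p) ℂ) (hL : IsUnit L)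
    (Z : Matrix (Fin p) (Fin q) ℂ) : L * (L⁻¹ * Z) = Z := by
  rw [← Matrix.mul_assoc, Matrix.mul_nonsing_inv _ ((Matrix.isUnit_iff_isUnit_det _).mp hL),
    Matrix.one_mul]

private lemma inv_cancel_left {p q : ℕ} (L : Matrix (Fin p) (Fin p) ℂ) (hL : IsUnit L)
    (Z : Matrix (Fin p) (Fin q) ℂ) : L⁻¹ * (L * Z) = Z := by
  rw [← Matrix.mul_assoc, Matrix.nonsing_inv_mul _ ((Matrix.isUnit_iff_isUnit_det _).mp hL),
    Matrix.one_mul]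

private lemma unscale {p q : ℕ} (L : Matrix (Fin p) (Fin p) ℂ) (Rm : Matrix (Fin q) (Fin q) ℂ)
    (hL : IsUnit L) (hR : IsUnit Rm) (X Y : Matrix (Fin p) (Fin q) ℂ)
    (h : L * X * Rm = Y) : X = L⁻¹ * Y * Rm⁻¹ := by
  have hLd := (Matrix.isUnit_iff_isUnit_det _).mp hL
  have hRd := (Matrix.isUnit_iff_isUnit_det _).mp hR
  rw [← h]
  calc X = (L⁻¹ * L) * X * (Rm * Rm⁻¹) := by
        rw [Matrix.nonsing_inv_mul _ hLd, Matrix.mul_nonsing_inv _ hRd, Matrix.one_mul,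
          Matrix.mul_one]
    _ = L⁻¹ * (L * X * Rm) * Rm⁻¹ := by simp only [Matrix.mul_assoc]

/-- One-step error propagation involving the dual fixed point `Y★`:
if `I − X' Y★` is invertible then so is `I − X'' Y★`, and
`(I − X'' Y★)⁻¹(X★ − X'') = S (I − X' Y★)⁻¹(X★ − X') R`. -/
theorem fixedpoint_error_propagation {m n : ℕ} (hm : 0 < m) (hn : 0 < n)
    (E₀ : Matrix (Fin n) (Fin n) ℂ) (F₀ : Matrix (Fin m) (Fin m) ℂ)
    (G₀ : Matrix (Fin n) (Fin m) ℂ) (H₀ : Matrix (Fin m) (Fin n) ℂ)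
    (Xstar X' : Matrix (Fin m) (Fin n) ℂ)
    (hXstar : IsUnit (1 - G₀ * Xstar)) (hX' : IsUnit (1 - G₀ * X'))
    (hfix : Xstar - H₀ = F₀ * Xstar * (1 - G₀ * Xstar)⁻¹ * E₀)
    (X'' : Matrix (Fin m) (Fin n) ℂ)
    (hX'' : X'' = H₀ + F₀ * X' * (1 - G₀ * X')⁻¹ * E₀)
    (R : Matrix (Fin n) (Fin n) ℂ)
    (hR : R = -((1 - G₀ * Xstar)⁻¹ * E₀))
    (Ystar : Matrix (Fin n) (Fin m) ℂ)
    (hYstar : IsUnit (1 - H₀ * Ystar))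
    (hfixY : Ystar = G₀ + E₀ * Ystar * (1 - H₀ * Ystar)⁻¹ * F₀)
    (S : Matrix (Fin m) (Fin m) ℂ)
    (hS : S = -((1 - H₀ * Ystar)⁻¹ * F₀))
    (hXY' : IsUnit (1 - X' * Ystar)) :
    IsUnit (1 - X'' * Ystar) ∧
      (1 - X'' * Ystar)⁻¹ * (Xstar - X'') =
        S * (1 - X' * Ystar)⁻¹ * (Xstar - X') * R := by
  have hB : IsUnit (1 - X' * G₀) := swap_isUnit G₀ X' hX'
  have hBs : IsUnit (1 - Xstar * G₀) := swap_isUnit G₀ Xstar hXstar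
  have hAd := (Matrix.isUnit_iff_isUnit_det _).mp hXstar
  have hBd := (Matrix.isUnit_iff_isUnit_det _).mp hB
  have hDd := (Matrix.isUnit_iff_isUnit_det _).mp hYstar
  have shift' : X' * (1 - G₀ * X')⁻¹ = (1 - X' * G₀)⁻¹ * X' := shift_inv X' G₀ hX'
  have shiftS : Xstar * (1 - G₀ * Xstar)⁻¹ = (1 - Xstar * G₀)⁻¹ * Xstar :=
    shift_inv Xstar G₀ hXstar
  -- the basic difference identity
  have main' : ((1 - X' * G₀) * ((1 - Xstar * G₀)⁻¹ * Xstar - (1 - X' * G₀)⁻¹ * X'))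
      * (1 - G₀ * Xstar) = Xstar - X' := by
    rw [Matrix.mul_sub (1 - X' * G₀) ((1 - Xstar * G₀)⁻¹ * Xstar) ((1 - X' * G₀)⁻¹ * X'),
      cancel_left _ hB, ← shiftS, Matrix.sub_mul]
    simp only [Matrix.mul_assoc]
    rw [Matrix.nonsing_inv_mul _ hAd, Matrix.mul_one]
    simp only [Matrix.sub_mul, Matrix.mul_sub, Matrix.one_mul, Matrix.mul_one, Matrix.mul_assoc]
    abel
  have diff3 : (1 - Xstar * G₀)⁻¹ * Xstar - (1 - X' * G₀)⁻¹ * X'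
      = (1 - X' * G₀)⁻¹ * ((Xstar - X') * (1 - G₀ * Xstar)⁻¹) := by
    have h := unscale _ _ hB hXstar _ _ main'
    rw [h, Matrix.mul_assoc]
  have hdiff : Xstar - X''
      = F₀ * ((1 - X' * G₀)⁻¹ * ((Xstar - X') * (1 - G₀ * Xstar)⁻¹)) * E₀ := by
    have e1 : Xstar - X''
        = F₀ * Xstar * (1 - G₀ * Xstar)⁻¹ * E₀ - F₀ * X' * (1 - G₀ * X')⁻¹ * E₀ := by
      rw [hX'', ← hfix]; abel
    rw [e1, ← diff3, Matrix.mul_assoc F₀ Xstar (1 - G₀ * Xstar)⁻¹, shiftS,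
      Matrix.mul_assoc F₀ X' (1 - G₀ * X')⁻¹, shift']
    simp only [Matrix.mul_sub, Matrix.sub_mul, Matrix.mul_assoc]
  -- the dual fixed-point identity
  have hkey : Ystar - G₀ = E₀ * Ystar * (1 - H₀ * Ystar)⁻¹ * F₀ := by
    nth_rewrite 1 [hfixY]; abel
  have hkey' : E₀ * (Ystar * ((1 - H₀ * Ystar)⁻¹ * F₀)) = Ystar - G₀ := by
    rw [hkey]; simp only [Matrix.mul_assoc]
  -- X'' * Ystar in convenient form
  have hX''Y : X'' * Ystar
      = H₀ * Ystar + F₀ * ((1 - X' * G₀)⁻¹ * (X' * (E₀ * Ystar))) := by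
    rw [hX'', Matrix.add_mul, Matrix.mul_assoc F₀ X' (1 - G₀ * X')⁻¹, shift']
    simp only [Matrix.mul_assoc]
  -- the product V * U
  have hVU_eq : 1 - ((1 - X' * G₀)⁻¹ * (X' * (E₀ * Ystar))) * ((1 - H₀ * Ystar)⁻¹ * F₀)
      = (1 - X' * G₀)⁻¹ * (1 - X' * Ystar) := by
    have hvu : ((1 - X' * G₀)⁻¹ * (X' * (E₀ * Ystar))) * ((1 - H₀ * Ystar)⁻¹ * F₀)
        = (1 - X' * G₀)⁻¹ * (X' * (Ystar - G₀)) := by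
      rw [← hkey']; simp only [Matrix.mul_assoc]
    rw [hvu]
    have inner2 : (1 - X' * G₀) - X' * (Ystar - G₀) = 1 - X' * Ystar := by
      simp only [Matrix.mul_sub]; abel
    calc 1 - (1 - X' * G₀)⁻¹ * (X' * (Ystar - G₀))
        = (1 - X' * G₀)⁻¹ * (1 - X' * G₀) - (1 - X' * G₀)⁻¹ * (X' * (Ystar - G₀)) := by
          rw [Matrix.nonsing_inv_mul _ hBd]
      _ = (1 - X' * G₀)⁻¹ * ((1 - X' * G₀) - X' * (Ystar - G₀)) :=
          (Matrix.mul_sub _ _ _).symm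
      _ = (1 - X' * G₀)⁻¹ * (1 - X' * Ystar) := by rw [inner2]
  -- factorization of 1 - X'' * Ystar
  have hfact : 1 - X'' * Ystar
      = (1 - H₀ * Ystar) * (1 - ((1 - H₀ * Ystar)⁻¹ * F₀)
          * ((1 - X' * G₀)⁻¹ * (X' * (E₀ * Ystar)))) := by
    rw [Matrix.mul_sub, Matrix.mul_one]
    simp only [Matrix.mul_assoc]
    rw [cancel_left _ hYstar, hX''Y]
    abel
  -- invertibility
  have hM : IsUnit (1 - X'' * Ystar) := by
    rw [hfact]
    refine hYstar.mul (swap_isUnit _ _ ?_)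
    rw [hVU_eq]
    exact (Matrix.isUnit_nonsing_inv_iff.mpr hB).mul hXY'
  refine ⟨hM, ?_⟩
  -- the key one-step identity
  have hswap2 : (1 - ((1 - H₀ * Ystar)⁻¹ * F₀) * ((1 - X' * G₀)⁻¹ * (X' * (E₀ * Ystar))))
      * ((1 - H₀ * Ystar)⁻¹ * F₀)
      = ((1 - H₀ * Ystar)⁻¹ * F₀)
        * (1 - ((1 - X' * G₀)⁻¹ * (X' * (E₀ * Ystar))) * ((1 - H₀ * Ystar)⁻¹ * F₀)) := by
    simp only [Matrix.sub_mul, Matrix.mul_sub, Matrix.one_mul, Matrix.mul_one, Matrix.mul_assoc]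
  have hL2 : (1 - X'' * Ystar) * ((1 - H₀ * Ystar)⁻¹ * F₀)
      = F₀ * ((1 - X' * G₀)⁻¹ * (1 - X' * Ystar)) := by
    calc (1 - X'' * Ystar) * ((1 - H₀ * Ystar)⁻¹ * F₀)
        = (1 - H₀ * Ystar) * ((1 - ((1 - H₀ * Ystar)⁻¹ * F₀)
            * ((1 - X' * G₀)⁻¹ * (X' * (E₀ * Ystar)))) * ((1 - H₀ * Ystar)⁻¹ * F₀)) := by
          rw [hfact, Matrix.mul_assoc]
      _ = (1 - H₀ * Ystar) * (((1 - H₀ * Ystar)⁻¹ * F₀)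
            * (1 - ((1 - X' * G₀)⁻¹ * (X' * (E₀ * Ystar))) * ((1 - H₀ * Ystar)⁻¹ * F₀))) := by
          rw [hswap2]
      _ = (1 - H₀ * Ystar) * ((1 - H₀ * Ystar)⁻¹
            * (F₀ * (1 - ((1 - X' * G₀)⁻¹ * (X' * (E₀ * Ystar)))
              * ((1 - H₀ * Ystar)⁻¹ * F₀)))) := by
          simp only [Matrix.mul_assoc]
      _ = F₀ * (1 - ((1 - X' * G₀)⁻¹ * (X' * (E₀ * Ystar)))
            * ((1 - H₀ * Ystar)⁻¹ * F₀)) := cancel_left _ hYstar _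
      _ = F₀ * ((1 - X' * G₀)⁻¹ * (1 - X' * Ystar)) := by rw [hVU_eq]
  have step1 : (1 - H₀ * Ystar)⁻¹ * F₀
      = (1 - X'' * Ystar)⁻¹ * (F₀ * ((1 - X' * G₀)⁻¹ * (1 - X' * Ystar))) := by
    have h := (inv_cancel_left (1 - X'' * Ystar) hM ((1 - H₀ * Ystar)⁻¹ * F₀)).symm
    rwa [hL2] at h
  rw [hdiff, hS, hR]
  simp only [Matrix.neg_mul, Matrix.mul_neg, neg_neg]
  rw [step1]
  simp only [Matrix.mul_assoc]
  rw [cancel_left _ hXY']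
end

section
/- Let X★ ∈ ℂ^{m×n} satisfy X★ − H_0 = F_0 X★ (I − G_0 X★)^{−1} E_0 with I − G_0 X★ invertible, let Y★ ∈ ℂ^{n×m} satisfy Y★ = G_0 + E_0 Y★ (I − H_0 Y★)^{−1} F_0 with I − H_0 Y★ invertible, and set R := −(I − G_0 X★)^{−1} E_0 and S := −(I − H_0 Y★)^{−1} F_0. Let (X_t) be defined by X_0 = 0 and X_{t+1} = H_0 + F_0 X_t (I − G_0 X_t)^{−1} E_0, and assume I − G_0 X_t is invertible for every t. Then for every t ≥ 0 the matrix I − X_t Y★ is invertible and X★ − X_t = (I − X_t Y★) S^t X★ R^t. -/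
open Matrix

section aux
variable {α β : Type*} [Fintype α] [Fintype β] [DecidableEq α] [DecidableEq β]

lemma aux_push_unit (X : Matrix α β ℂ) (G : Matrix β α ℂ) (h : IsUnit (1 - G * X)) :
    IsUnit (1 - X * G) := by
  have hd := (Matrix.isUnit_iff_isUnit_det _).mp h
  refine (Matrix.isUnit_iff_isUnit_det _).mpr <| Matrix.isUnit_det_of_right_inverse (B := 1 + X * (1 - G * X)⁻¹ * G) ?_
  have h1 : (1 - G * X) * (1 - G * X)⁻¹ = 1 := Matrix.mul_nonsing_inv _ hd
  calc (1 - X * G) * (1 + X * (1 - G * X)⁻¹ * G)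
      = X * ((1 - G * X) * (1 - G * X)⁻¹) * G + 1 - X * G := by
        simp only [Matrix.mul_add, Matrix.add_mul, Matrix.mul_sub, Matrix.sub_mul,
          Matrix.mul_one, Matrix.one_mul, Matrix.mul_assoc]
        abel
    _ = 1 := by rw [h1, Matrix.mul_one]; abel

lemma aux_push_through (X : Matrix α β ℂ) (G : Matrix β α ℂ) (h : IsUnit (1 - G * X)) :
    X * (1 - G * X)⁻¹ = (1 - X * G)⁻¹ * X := by
  have h2 := aux_push_unit X G h
  have hd := (Matrix.isUnit_iff_isUnit_det _).mp h
  have hd2 := (Matrix.isUnit_iff_isUnit_det _).mp h2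
  have key : (1 - X * G) * (X * (1 - G * X)⁻¹) = X := by
    calc (1 - X * G) * (X * (1 - G * X)⁻¹)
        = (X * (1 - G * X)) * (1 - G * X)⁻¹ := by
          simp only [Matrix.sub_mul, Matrix.mul_sub, Matrix.one_mul, Matrix.mul_one,
            Matrix.mul_assoc]
      _ = X := Matrix.mul_nonsing_inv_cancel_right _ _ hd
  calc X * (1 - G * X)⁻¹
      = (1 - X * G)⁻¹ * ((1 - X * G) * (X * (1 - G * X)⁻¹)) :=
        (Matrix.nonsing_inv_mul_cancel_left _ _ hd2).symm
    _ = (1 - X * G)⁻¹ * X := by rw [key]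

lemma aux_isUnit_one_add_comm (a b : Matrix α α ℂ) (h : IsUnit (1 + a * b)) :
    IsUnit (1 + b * a) := by
  have hd := (Matrix.isUnit_iff_isUnit_det _).mp h
  refine (Matrix.isUnit_iff_isUnit_det _).mpr <| Matrix.isUnit_det_of_right_inverse (B := 1 - b * (1 + a * b)⁻¹ * a) ?_
  have h1 : (1 + a * b) * (1 + a * b)⁻¹ = 1 := Matrix.mul_nonsing_inv _ hd
  calc (1 + b * a) * (1 - b * (1 + a * b)⁻¹ * a)
      = 1 + b * a - b * (((1 + a * b) * (1 + a * b)⁻¹) * a) := by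
        simp only [Matrix.mul_add, Matrix.add_mul, Matrix.mul_sub, Matrix.sub_mul,
          Matrix.mul_one, Matrix.one_mul, Matrix.mul_assoc]
    _ = 1 := by rw [h1, Matrix.one_mul]; abel

end aux

/-- Explicit error form for the fixed-point iteration with zero initial value:
for every `t`, `I − X_t Y★` is invertible and `X★ − X_t = (I − X_t Y★) Sᵗ X★ Rᵗ`. -/
theorem fixedpoint_explicit_error {m n : ℕ} (hm : 0 < m) (hn : 0 < n)
    (E₀ : Matrix (Fin n) (Fin n) ℂ) (F₀ : Matrix (Fin m) (Fin m) ℂ)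
    (G₀ : Matrix (Fin n) (Fin m) ℂ) (H₀ : Matrix (Fin m) (Fin n) ℂ)
    (Xstar : Matrix (Fin m) (Fin n) ℂ)
    (hXstar : IsUnit (1 - G₀ * Xstar))
    (hfix : Xstar - H₀ = F₀ * Xstar * (1 - G₀ * Xstar)⁻¹ * E₀)
    (Ystar : Matrix (Fin n) (Fin m) ℂ)
    (hYstar : IsUnit (1 - H₀ * Ystar))
    (hfixY : Ystar = G₀ + E₀ * Ystar * (1 - H₀ * Ystar)⁻¹ * F₀)
    (R : Matrix (Fin n) (Fin n) ℂ) (hR : R = -((1 - G₀ * Xstar)⁻¹ * E₀))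
    (S : Matrix (Fin m) (Fin m) ℂ) (hS : S = -((1 - H₀ * Ystar)⁻¹ * F₀))
    (X : ℕ → Matrix (Fin m) (Fin n) ℂ)
    (hX0 : X 0 = 0)
    (hXsucc : ∀ t : ℕ, X (t + 1) = H₀ + F₀ * X t * (1 - G₀ * X t)⁻¹ * E₀)
    (hinv : ∀ t : ℕ, IsUnit (1 - G₀ * X t)) :
    ∀ t : ℕ, IsUnit (1 - X t * Ystar) ∧
      Xstar - X t = (1 - X t * Ystar) * S ^ t * Xstar * R ^ t := by
  -- global facts
  have d2 := (Matrix.isUnit_iff_isUnit_det _).mp hXstar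
  have d5 := (Matrix.isUnit_iff_isUnit_det _).mp hYstar
  have f1 : (1 - H₀ * Ystar) * S = -F₀ := by
    rw [hS, Matrix.mul_neg, Matrix.mul_nonsing_inv_cancel_left _ _ d5]
  have hF : F₀ = -((1 - H₀ * Ystar) * S) := by rw [f1, neg_neg]
  have f2 : Ystar = G₀ - E₀ * Ystar * S := by
    have h1 : E₀ * Ystar * S = -(E₀ * Ystar * ((1 - H₀ * Ystar)⁻¹ * F₀)) := by
      rw [hS, Matrix.mul_neg]
    rw [h1, sub_neg_eq_add, ← Matrix.mul_assoc]
    exact hfixY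
  have hRE : (1 - G₀ * Xstar)⁻¹ * E₀ = -R := by rw [hR, neg_neg]
  have hXsfix : Xstar - H₀ = F₀ * ((1 - Xstar * G₀)⁻¹ * Xstar) * E₀ := by
    rw [hfix, Matrix.mul_assoc F₀ Xstar (1 - G₀ * Xstar)⁻¹,
      aux_push_through Xstar G₀ hXstar]
  intro t
  induction t with
  | zero => refine ⟨?_, ?_⟩ <;> simp [hX0]
  | succ t ih =>
    obtain ⟨ihU, ihE⟩ := ih
    have d3 := (Matrix.isUnit_iff_isUnit_det _).mp (aux_push_unit (X t) G₀ (hinv t))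
    have d6 := (Matrix.isUnit_iff_isUnit_det _).mp ihU
    have hXt1 : X (t + 1) = H₀ + F₀ * ((1 - X t * G₀)⁻¹ * X t) * E₀ := by
      rw [hXsucc t, Matrix.mul_assoc F₀ (X t) (1 - G₀ * X t)⁻¹,
        aux_push_through (X t) G₀ (hinv t)]
    have e1 : Xstar - X (t + 1)
        = F₀ * ((1 - Xstar * G₀)⁻¹ * Xstar) * E₀ - F₀ * ((1 - X t * G₀)⁻¹ * X t) * E₀ := by
      rw [← hXsfix, hXt1]; abel
    have poly : (1 - X t * G₀) * Xstar - X t * (1 - G₀ * Xstar) = Xstar - X t := by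
      simp only [Matrix.sub_mul, Matrix.mul_sub, Matrix.one_mul, Matrix.mul_one,
        Matrix.mul_assoc]
      abel
    have f5 : (1 - X t * G₀)⁻¹ * ((Xstar - X t) * (1 - G₀ * Xstar)⁻¹)
        = Xstar * (1 - G₀ * Xstar)⁻¹ - (1 - X t * G₀)⁻¹ * X t := by
      rw [← poly, Matrix.sub_mul, Matrix.mul_sub,
        Matrix.mul_nonsing_inv_cancel_right _ _ d2,
        Matrix.mul_assoc (1 - X t * G₀) Xstar (1 - G₀ * Xstar)⁻¹,
        Matrix.nonsing_inv_mul_cancel_left _ _ d3]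
    have hdiff : Xstar - X (t + 1)
        = F₀ * ((1 - X t * G₀)⁻¹ * ((Xstar - X t) * (1 - G₀ * Xstar)⁻¹)) * E₀ := by
      rw [f5, Matrix.mul_sub F₀, Matrix.sub_mul, aux_push_through Xstar G₀ hXstar]
      exact e1
    have hK3a : (1 - X t * G₀) * ((1 - X t * G₀)⁻¹ * (X t * (E₀ * Ystar)))
        = X t * (E₀ * Ystar) := Matrix.mul_nonsing_inv_cancel_left _ _ d3
    have f6a : (1 - X t * G₀) * (1 + ((1 - X t * G₀)⁻¹ * (X t * (E₀ * Ystar))) * S)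
        = 1 - X t * Ystar := by
      rw [Matrix.mul_add, Matrix.mul_one,
        ← Matrix.mul_assoc (1 - X t * G₀) ((1 - X t * G₀)⁻¹ * (X t * (E₀ * Ystar))) S,
        hK3a]
      conv_rhs => rw [f2]
      simp only [Matrix.mul_sub, Matrix.sub_mul, Matrix.mul_assoc]
      abel
    have f6 : (1 - X t * G₀)⁻¹ * (1 - X t * Ystar)
        = 1 + ((1 - X t * G₀)⁻¹ * (X t * (E₀ * Ystar))) * S := by
      rw [← f6a, Matrix.nonsing_inv_mul_cancel_left _ _ d3]
    have f7 : 1 - X (t + 1) * Ystar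
        = (1 - H₀ * Ystar) * (1 + S * ((1 - X t * G₀)⁻¹ * (X t * (E₀ * Ystar)))) := by
      rw [hXt1, Matrix.add_mul,
        Matrix.mul_add (1 - H₀ * Ystar), Matrix.mul_one,
        ← Matrix.mul_assoc (1 - H₀ * Ystar) S ((1 - X t * G₀)⁻¹ * (X t * (E₀ * Ystar))),
        f1]
      simp only [Matrix.neg_mul, Matrix.mul_assoc]
      abel
    have h1 : IsUnit ((1 - X t * G₀)⁻¹ * (1 - X t * Ystar)) := by
      refine (Matrix.isUnit_iff_isUnit_det _).mpr <| Matrix.isUnit_det_of_right_inverse (B := (1 - X t * Ystar)⁻¹ * (1 - X t * G₀)) ?_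
      rw [Matrix.mul_assoc, Matrix.mul_nonsing_inv_cancel_left _ _ d6,
        Matrix.nonsing_inv_mul _ d3]
    rw [f6] at h1
    have f8 : IsUnit (1 + S * ((1 - X t * G₀)⁻¹ * (X t * (E₀ * Ystar)))) :=
      aux_isUnit_one_add_comm _ _ h1
    have hu : IsUnit (1 - X (t + 1) * Ystar) := by rw [f7]; exact hYstar.mul f8
    refine ⟨hu, ?_⟩
    have step1 : (1 - X t * G₀)⁻¹ * ((1 - X t * Ystar) * (S ^ t * (Xstar * (R ^ t * R))))
        = S ^ t * (Xstar * (R ^ t * R))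
          + ((1 - X t * G₀)⁻¹ * (X t * (E₀ * Ystar)))
            * (S * (S ^ t * (Xstar * (R ^ t * R)))) := by
      rw [← Matrix.mul_assoc, f6, Matrix.add_mul, Matrix.one_mul, Matrix.mul_assoc]
    rw [hdiff, ihE, f7, pow_succ' S t, pow_succ R t, hF]
    simp only [Matrix.mul_assoc]
    rw [hRE]
    simp only [Matrix.mul_neg, Matrix.neg_mul, neg_neg, Matrix.mul_assoc]
    rw [step1]
    simp only [Matrix.mul_add, Matrix.add_mul, Matrix.one_mul, Matrix.mul_assoc]
end

section
/- Let (X_t) be a sequence in ℂ^{m×n}, X★ ∈ ℂ^{m×n}, Y★ ∈ ℂ^{n×m}, S ∈ ℂ^{m×m} and R ∈ ℂ^{n×n}. Suppose X★ − X_t = (I − X_t Y★) S^t X★ R^t for all t ≥ 0, and that ρ(S)·ρ(R) < 1, where ρ denotes the spectral radius. Then X_t → X★ as t → ∞, and limsup_{t→∞} ‖X_t − X★‖^{1/t} ≤ ρ(R)·ρ(S) (for any fixed matrix norm). -/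
open Matrix Filter

section FPLCaux

attribute [local instance] Matrix.linftyOpNormedAddCommGroup Matrix.linftyOpNormedRing
  Matrix.linftyOpNormedAlgebra Matrix.linftyOpNormedSpace

/-- Gelfand's formula, real form, for complex matrices with the `L∞` operator norm. -/
private lemma fplc_gelfand {k : ℕ} (hk : 0 < k) (S : Matrix (Fin k) (Fin k) ℂ) :
    Tendsto (fun t : ℕ => ‖S ^ t‖ ^ ((1 : ℝ) / t)) atTop
      (nhds (spectralRadius ℂ S).toReal) := by
  haveI : Nonempty (Fin k) := ⟨⟨0, hk⟩⟩
  have h := spectrum.pow_nnnorm_pow_one_div_tendsto_nhds_spectralRadius S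
  have hne : spectralRadius ℂ S ≠ ⊤ :=
    ((spectrum.spectralRadius_le_nnnorm (𝕜 := ℂ) S).trans_lt ENNReal.coe_lt_top).ne
  have h2 := (ENNReal.tendsto_toReal hne).comp h
  convert h2 using 2 with t
  simp only [Function.comp_apply, ← ENNReal.toReal_rpow, ENNReal.coe_toReal, coe_nnnorm]

private lemma fplc_srad_ne_top {k : ℕ} (hk : 0 < k) (S : Matrix (Fin k) (Fin k) ℂ) :
    spectralRadius ℂ S ≠ ⊤ := by
  haveI : Nonempty (Fin k) := ⟨⟨0, hk⟩⟩
  exact ((spectrum.spectralRadius_le_nnnorm (𝕜 := ℂ) S).trans_lt ENNReal.coe_lt_top).ne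

/-- Eventually `‖Sᵗ‖ ‖Rᵗ‖ ≤ cᵗ` for any `c` above the product of spectral radii. -/
private lemma fplc_prod_bound {m n : ℕ} (hm : 0 < m) (hn : 0 < n)
    (S : Matrix (Fin m) (Fin m) ℂ) (R : Matrix (Fin n) (Fin n) ℂ) {c : ℝ}
    (hc : (spectralRadius ℂ S * spectralRadius ℂ R).toReal < c) :
    ∀ᶠ t : ℕ in atTop, ‖S ^ t‖ * ‖R ^ t‖ ≤ c ^ t := by
  have hmul := (fplc_gelfand hm S).mul (fplc_gelfand hn R)
  rw [ENNReal.toReal_mul] at hc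
  have hev := hmul.eventually_lt_const hc
  filter_upwards [hev, eventually_ge_atTop 1] with t ht ht1
  have htne : (t : ℝ) ≠ 0 := by positivity
  have hx : (0 : ℝ) ≤ ‖S ^ t‖ := norm_nonneg _
  have hy : (0 : ℝ) ≤ ‖R ^ t‖ := norm_nonneg _
  have key : ‖S ^ t‖ * ‖R ^ t‖
      = (‖S ^ t‖ ^ ((1 : ℝ) / t) * ‖R ^ t‖ ^ ((1 : ℝ) / t)) ^ t := by
    rw [mul_pow, ← Real.rpow_natCast (‖S ^ t‖ ^ ((1 : ℝ) / t)) t,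
      ← Real.rpow_natCast (‖R ^ t‖ ^ ((1 : ℝ) / t)) t,
      ← Real.rpow_mul hx, ← Real.rpow_mul hy, one_div_mul_cancel htne,
      Real.rpow_one, Real.rpow_one]
  rw [key]
  exact pow_le_pow_left₀ (by positivity) ht.le t

private lemma fplc_real_small {B C q : ℝ} (hB0 : 0 ≤ B) (hC0 : 0 ≤ C) (hq0 : 0 ≤ q)
    (hq : q ≤ 1 / (2 * (C * B + 1))) : B * C * q ≤ 1 / 2 := by
  have h3 : (B * C) * q ≤ (B * C) * (1 / (2 * (C * B + 1))) :=
    mul_le_mul_of_nonneg_left hq (by positivity)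
  have h4 : (B * C) * (1 / (2 * (C * B + 1))) ≤ 1 / 2 := by
    rw [mul_one_div, div_le_div_iff₀ (by positivity) (by norm_num)]
    nlinarith
  nlinarith

private lemma fplc_real_main {A B C e q : ℝ} (hA0 : 0 ≤ A) (hC0 : 0 ≤ C) (he0 : 0 ≤ e)
    (hq0 : 0 ≤ q) (hmain : e ≤ (A + e * B) * (C * q)) (hBCq : B * C * q ≤ 1 / 2) :
    e ≤ (2 * A * C + 1) * q := by
  have hexpand : (A + e * B) * (C * q) = A * C * q + e * (B * C * q) := by ring
  have h5 : e * (B * C * q) ≤ e * (1 / 2) := mul_le_mul_of_nonneg_left hBCq he0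
  have hgoal : (2 * A * C + 1) * q = 2 * (A * C * q) + q := by ring
  rw [hgoal]
  rw [hexpand] at hmain
  linarith

set_option maxHeartbeats 1000000 in
/-- Key eventual error bound. -/
private lemma fplc_key {m n : ℕ} (hm : 0 < m) (hn : 0 < n)
    (X : ℕ → Matrix (Fin m) (Fin n) ℂ) (Xstar : Matrix (Fin m) (Fin n) ℂ)
    (Ystar : Matrix (Fin n) (Fin m) ℂ)
    (S : Matrix (Fin m) (Fin m) ℂ) (R : Matrix (Fin n) (Fin n) ℂ)
    (herr : ∀ t : ℕ, Xstar - X t = (1 - X t * Ystar) * S ^ t * Xstar * R ^ t)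
    (hρ : spectralRadius ℂ S * spectralRadius ℂ R < 1) :
    ∃ K : ℝ, 0 < K ∧ ∀ c : ℝ,
      (spectralRadius ℂ S * spectralRadius ℂ R).toReal < c →
      ∀ᶠ t : ℕ in atTop, ‖Xstar - X t‖ ≤ K * c ^ t := by
  set A : ℝ := ‖(1 : Matrix (Fin m) (Fin m) ℂ) - Xstar * Ystar‖ with hA
  set B : ℝ := ‖Ystar‖ with hB
  set C : ℝ := ‖Xstar‖ with hC
  have hA0 : 0 ≤ A := norm_nonneg _
  have hB0 : 0 ≤ B := norm_nonneg _
  have hC0 : 0 ≤ C := norm_nonneg _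
  refine ⟨2 * A * C + 1, by positivity, ?_⟩
  -- the spectral radius product is `< 1` in real terms
  have htop : (spectralRadius ℂ S * spectralRadius ℂ R).toReal < 1 := by
    have := ENNReal.toReal_strict_mono (by simp) hρ
    simpa using this
  have htR0 : 0 ≤ (spectralRadius ℂ S * spectralRadius ℂ R).toReal := ENNReal.toReal_nonneg
  set c0 : ℝ := ((spectralRadius ℂ S * spectralRadius ℂ R).toReal + 1) / 2 with hc0def
  have hc0lt : (spectralRadius ℂ S * spectralRadius ℂ R).toReal < c0 := by
    rw [hc0def]; linarith
  have hc00 : 0 ≤ c0 := by rw [hc0def]; linarith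
  have hc01 : c0 < 1 := by rw [hc0def]; linarith
  have hq0 := fplc_prod_bound hm hn S R hc0lt
  have htend : Tendsto (fun t : ℕ => c0 ^ t) atTop (nhds 0) :=
    tendsto_pow_atTop_nhds_zero_of_lt_one hc00 hc01
  have hsmall : ∀ᶠ t : ℕ in atTop, c0 ^ t ≤ 1 / (2 * (C * B + 1)) :=
    htend.eventually_le_const (by positivity)
  -- eventual bound `‖Xstar - X t‖ ≤ (2AC) * (‖Sᵗ‖ ‖Rᵗ‖)`
  have hE : ∀ᶠ t : ℕ in atTop,
      ‖Xstar - X t‖ ≤ (2 * A * C + 1) * (‖S ^ t‖ * ‖R ^ t‖) := by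
    filter_upwards [hq0, hsmall] with t h1 h2
    set q : ℝ := ‖S ^ t‖ * ‖R ^ t‖ with hq
    have hq0' : 0 ≤ q := by positivity
    set e : ℝ := ‖Xstar - X t‖ with he
    have he0 : 0 ≤ e := norm_nonneg _
    have hqsmall : q ≤ 1 / (2 * (C * B + 1)) := h1.trans h2
    have hBCq : B * C * q ≤ 1 / 2 := fplc_real_small hB0 hC0 hq0' hqsmall
    -- split `1 - X t * Ystar`
    have hone : ‖(1 : Matrix (Fin m) (Fin m) ℂ) - X t * Ystar‖ ≤ A + e * B := by
      have hsplit : (1 : Matrix (Fin m) (Fin m) ℂ) - X t * Ystar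
          = (1 - Xstar * Ystar) + (Xstar - X t) * Ystar := by
        rw [Matrix.sub_mul]; abel
      calc ‖(1 : Matrix (Fin m) (Fin m) ℂ) - X t * Ystar‖
          = ‖(1 - Xstar * Ystar) + (Xstar - X t) * Ystar‖ := by rw [hsplit]
        _ ≤ A + ‖(Xstar - X t) * Ystar‖ := norm_add_le _ _
        _ ≤ A + e * B := by
            have := Matrix.linfty_opNorm_mul (Xstar - X t) Ystar
            linarith
    have hmain : e ≤ (A + e * B) * (C * q) := by
      have step1 : e ≤ ‖(1 - X t * Ystar) * S ^ t * Xstar‖ * ‖R ^ t‖ := by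
        rw [he, herr t]; exact Matrix.linfty_opNorm_mul _ _
      have step2 : ‖(1 - X t * Ystar) * S ^ t * Xstar‖
          ≤ ‖(1 - X t * Ystar) * S ^ t‖ * C := Matrix.linfty_opNorm_mul _ _
      have step3 : ‖(1 - X t * Ystar) * S ^ t‖
          ≤ ‖(1 : Matrix (Fin m) (Fin m) ℂ) - X t * Ystar‖ * ‖S ^ t‖ :=
        Matrix.linfty_opNorm_mul _ _
      have hS0 : (0 : ℝ) ≤ ‖S ^ t‖ := norm_nonneg _
      have hR0 : (0 : ℝ) ≤ ‖R ^ t‖ := norm_nonneg _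
      have h1e : (0:ℝ) ≤ A + e * B := by positivity
      calc e ≤ ‖(1 - X t * Ystar) * S ^ t * Xstar‖ * ‖R ^ t‖ := step1
        _ ≤ (‖(1 - X t * Ystar) * S ^ t‖ * C) * ‖R ^ t‖ :=
            mul_le_mul_of_nonneg_right step2 hR0
        _ ≤ ((‖(1 : Matrix (Fin m) (Fin m) ℂ) - X t * Ystar‖ * ‖S ^ t‖) * C) * ‖R ^ t‖ :=
            mul_le_mul_of_nonneg_right
              (mul_le_mul_of_nonneg_right step3 hC0) hR0
        _ ≤ (((A + e * B) * ‖S ^ t‖) * C) * ‖R ^ t‖ :=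
            mul_le_mul_of_nonneg_right
              (mul_le_mul_of_nonneg_right
                (mul_le_mul_of_nonneg_right hone hS0) hC0) hR0
        _ = (A + e * B) * (C * q) := by rw [hq]; ring
    exact fplc_real_main hA0 hC0 he0 hq0' hmain hBCq
  intro c hc
  have hcpos : 0 < c := lt_of_le_of_lt htR0 hc
  filter_upwards [hE, fplc_prod_bound hm hn S R hc] with t h1 h2
  calc ‖Xstar - X t‖ ≤ (2 * A * C + 1) * (‖S ^ t‖ * ‖R ^ t‖) := h1
    _ ≤ (2 * A * C + 1) * c ^ t := by
        exact mul_le_mul_of_nonneg_left h2 (by positivity)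

/-- Matrix entries are dominated by the `L∞` operator norm. -/
private lemma fplc_entry_le {m n : ℕ} (A : Matrix (Fin m) (Fin n) ℂ) (i : Fin m) (j : Fin n) :
    ‖A i j‖ ≤ ‖A‖ := by
  rw [Matrix.linfty_opNorm_def]
  have h1 : ‖A i j‖₊ ≤ ∑ j' : Fin n, ‖A i j'‖₊ :=
    Finset.single_le_sum (f := fun j' => ‖A i j'‖₊) (fun _ _ => zero_le) (Finset.mem_univ j)
  have h2 : (∑ j' : Fin n, ‖A i j'‖₊)
      ≤ (Finset.univ : Finset (Fin m)).sup fun i : Fin m => ∑ j' : Fin n, ‖A i j'‖₊ :=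
    Finset.le_sup (f := fun i : Fin m => ∑ j' : Fin n, ‖A i j'‖₊) (Finset.mem_univ i)
  exact_mod_cast h1.trans h2

/-- Any "matrix norm" `N` is dominated by a constant times the `L∞` operator norm. -/
private lemma fplc_N_le {m n : ℕ} (N : Matrix (Fin m) (Fin n) ℂ → ℝ)
    (h0 : ∀ Y, 0 ≤ N Y)
    (hadd : ∀ Y Z, N (Y + Z) ≤ N Y + N Z)
    (hsmul : ∀ (c : ℂ) Y, N (c • Y) = ‖c‖ * N Y)
    (Y : Matrix (Fin m) (Fin n) ℂ) :
    N Y ≤ (∑ i : Fin m, ∑ j : Fin n, N (Matrix.single i j 1)) * ‖Y‖ := by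
  have hN0 : N 0 = 0 := by simpa using hsmul 0 0
  have hsum : ∀ {ι : Type} (s : Finset ι) (f : ι → Matrix (Fin m) (Fin n) ℂ),
      N (∑ x ∈ s, f x) ≤ ∑ x ∈ s, N (f x) := fun s f =>
    Finset.le_sum_of_subadditive N hN0.le hadd s f
  calc N Y = N (∑ i : Fin m, ∑ j : Fin n, Matrix.single i j (Y i j)) := by
        rw [← Matrix.matrix_eq_sum_single Y]
    _ ≤ ∑ i : Fin m, N (∑ j : Fin n, Matrix.single i j (Y i j)) := hsum _ _
    _ ≤ ∑ i : Fin m, ∑ j : Fin n, N (Matrix.single i j (Y i j)) :=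
        Finset.sum_le_sum fun i _ => hsum _ _
    _ ≤ ∑ i : Fin m, ∑ j : Fin n, N (Matrix.single i j 1) * ‖Y‖ := by
        refine Finset.sum_le_sum fun i _ => Finset.sum_le_sum fun j _ => ?_
        have heq : Matrix.single i j (Y i j)
            = (Y i j) • Matrix.single i j 1 := by
          rw [Matrix.smul_single, smul_eq_mul, mul_one]
        rw [heq, hsmul]
        calc ‖Y i j‖ * N (Matrix.single i j 1)
            ≤ ‖Y‖ * N (Matrix.single i j 1) :=
              mul_le_mul_of_nonneg_right (fplc_entry_le Y i j) (h0 _)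
          _ = N (Matrix.single i j 1) * ‖Y‖ := mul_comm _ _
    _ = (∑ i : Fin m, ∑ j : Fin n, N (Matrix.single i j 1)) * ‖Y‖ := by
        rw [Finset.sum_mul]
        exact Finset.sum_congr rfl fun i _ => (Finset.sum_mul _ _ _).symm

/-- Version of `fplc_N_le` usable outside this section. -/
private lemma fplc_N_le2 {m n : ℕ} (N : Matrix (Fin m) (Fin n) ℂ → ℝ)
    (h0 : ∀ Y, 0 ≤ N Y)
    (hadd : ∀ Y Z, N (Y + Z) ≤ N Y + N Z)
    (hsmul : ∀ (c : ℂ) Y, N (c • Y) = ‖c‖ * N Y)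
    (Y : Matrix (Fin m) (Fin n) ℂ) {b : ℝ} (hb : ‖Y‖ ≤ b) :
    N Y ≤ (∑ i : Fin m, ∑ j : Fin n, N (Matrix.single i j 1)) * b := by
  have hCN0 : 0 ≤ ∑ i : Fin m, ∑ j : Fin n, N (Matrix.single i j 1) :=
    Finset.sum_nonneg fun i _ => Finset.sum_nonneg fun j _ => h0 _
  exact (fplc_N_le N h0 hadd hsmul Y).trans (mul_le_mul_of_nonneg_left hb hCN0)

end FPLCaux

/-- If `X★ − X_t = (I − X_t Y★) Sᵗ X★ Rᵗ` for all `t` and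
`ρ(S)·ρ(R) < 1`, then `X_t → X★`, and for any matrix norm the `t`-th roots of the errors
have limsup at most `ρ(R)·ρ(S)`. -/
theorem fixedpoint_linear_convergence {m n : ℕ} (hm : 0 < m) (hn : 0 < n)
    (X : ℕ → Matrix (Fin m) (Fin n) ℂ) (Xstar : Matrix (Fin m) (Fin n) ℂ)
    (Ystar : Matrix (Fin n) (Fin m) ℂ)
    (S : Matrix (Fin m) (Fin m) ℂ) (R : Matrix (Fin n) (Fin n) ℂ)
    (herr : ∀ t : ℕ, Xstar - X t = (1 - X t * Ystar) * S ^ t * Xstar * R ^ t)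
    (hρ : spectralRadius ℂ S * spectralRadius ℂ R < 1) :
    Tendsto X atTop (nhds Xstar) ∧
      ∀ N : Matrix (Fin m) (Fin n) ℂ → ℝ,
        (∀ Y, 0 ≤ N Y) →
        (∀ Y, N Y = 0 ↔ Y = 0) →
        (∀ Y Z, N (Y + Z) ≤ N Y + N Z) →
        (∀ (c : ℂ) Y, N (c • Y) = ‖c‖ * N Y) →
        atTop.limsup (fun t : ℕ => N (X t - Xstar) ^ ((1 : ℝ) / t)) ≤
          (spectralRadius ℂ R * spectralRadius ℂ S).toReal := by
  obtain ⟨K, hK, hbound⟩ := fplc_key hm hn X Xstar Ystar S R herr hρ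
  have htop : (spectralRadius ℂ S * spectralRadius ℂ R).toReal < 1 := by
    have := ENNReal.toReal_strict_mono (by simp) hρ
    simpa using this
  have htR0 : 0 ≤ (spectralRadius ℂ S * spectralRadius ℂ R).toReal := ENNReal.toReal_nonneg
  constructor
  · -- convergence, entrywise in the product topology
    set c0 : ℝ := ((spectralRadius ℂ S * spectralRadius ℂ R).toReal + 1) / 2 with hc0def
    have hc0lt : (spectralRadius ℂ S * spectralRadius ℂ R).toReal < c0 := by
      rw [hc0def]; linarith
    have hc00 : 0 ≤ c0 := by rw [hc0def]; linarith
    have hc01 : c0 < 1 := by rw [hc0def]; linarith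
    have htend : Tendsto (fun t : ℕ => K * c0 ^ t) atTop (nhds 0) := by
      have := (tendsto_pow_atTop_nhds_zero_of_lt_one hc00 hc01).const_mul K
      simpa using this
    have hentry : ∀ (i : Fin m) (j : Fin n),
        Tendsto (fun t : ℕ => X t i j) atTop (nhds (Xstar i j)) := by
      intro i j
      have hz : Tendsto (fun t : ℕ => Xstar i j - X t i j) atTop (nhds 0) := by
        refine squeeze_zero_norm' ?_ htend
        filter_upwards [hbound c0 hc0lt] with t ht
        have h1 : ‖Xstar i j - X t i j‖ = ‖(Xstar - X t) i j‖ := by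
          simp [Matrix.sub_apply]
        rw [h1]
        exact (fplc_entry_le (Xstar - X t) i j).trans ht
      have h2 : Tendsto (fun t : ℕ => Xstar i j - (Xstar i j - X t i j)) atTop
          (nhds (Xstar i j - 0)) := Tendsto.sub tendsto_const_nhds hz
      simpa using h2
    exact tendsto_pi_nhds.mpr fun i => tendsto_pi_nhds.mpr fun j => hentry i j
  · intro N h0 _hzero hadd hsmul
    set CN : ℝ := ∑ i : Fin m, ∑ j : Fin n, N (Matrix.single i j 1) with hCN
    have hCN0 : 0 ≤ CN := by
      rw [hCN]
      exact Finset.sum_nonneg fun i _ => Finset.sum_nonneg fun j _ => h0 _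
    set K2 : ℝ := max (CN * K) 1 with hK2
    have hK21 : (1 : ℝ) ≤ K2 := le_max_right _ _
    have hK2pos : (0 : ℝ) < K2 := lt_of_lt_of_le one_pos hK21
    -- main claim: limsup ≤ c for every c above the product of spectral radii
    have claim : ∀ c : ℝ, (spectralRadius ℂ S * spectralRadius ℂ R).toReal < c →
        atTop.limsup (fun t : ℕ => N (X t - Xstar) ^ ((1 : ℝ) / t)) ≤ c := by
      intro c hc
      have hcpos : 0 < c := lt_of_le_of_lt htR0 hc
      have hev : ∀ᶠ t : ℕ in atTop, N (X t - Xstar) ≤ K2 * c ^ t := by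
        filter_upwards [hbound c hc] with t ht
        have hneg : X t - Xstar = ((-1 : ℂ)) • (Xstar - X t) := by
          rw [neg_one_smul]; abel
        have hNeq : N (X t - Xstar) = N (Xstar - X t) := by
          rw [hneg, hsmul]; simp
        calc N (X t - Xstar) = N (Xstar - X t) := hNeq
          _ ≤ CN * (K * c ^ t) := by
              rw [hCN]; exact fplc_N_le2 N h0 hadd hsmul _ ht
          _ = (CN * K) * c ^ t := by ring
          _ ≤ K2 * c ^ t := mul_le_mul_of_nonneg_right (le_max_left _ _) (by positivity)
      set g : ℕ → ℝ := fun t => K2 ^ ((1 : ℝ) / t) * c with hg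
      have hfg : (fun t : ℕ => N (X t - Xstar) ^ ((1 : ℝ) / t)) ≤ᶠ[atTop] g := by
        filter_upwards [hev, eventually_ge_atTop 1] with t ht ht1
        have htne : (t : ℝ) ≠ 0 := by positivity
        have hinv0 : (0 : ℝ) ≤ (1 : ℝ) / t := by positivity
        calc N (X t - Xstar) ^ ((1 : ℝ) / t)
            ≤ (K2 * c ^ t) ^ ((1 : ℝ) / t) :=
              Real.rpow_le_rpow (h0 _) ht hinv0
          _ = K2 ^ ((1 : ℝ) / t) * (c ^ t) ^ ((1 : ℝ) / t) :=
              Real.mul_rpow hK2pos.le (by positivity)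
          _ = g t := by
              rw [hg, ← Real.rpow_natCast c t, ← Real.rpow_mul hcpos.le,
                mul_one_div, div_self htne, Real.rpow_one]
      have hgtend : Tendsto g atTop (nhds c) := by
        have h1 : Tendsto (fun t : ℕ => K2 ^ ((1 : ℝ) / t)) atTop (nhds 1) := by
          have hc1 : ContinuousAt (fun x : ℝ => K2 ^ x) 0 :=
            Real.continuousAt_const_rpow hK2pos.ne'
          have h1' := hc1.tendsto.comp tendsto_one_div_atTop_nhds_zero_nat
          simpa [Real.rpow_zero, Function.comp_def] using h1'
        have h2' := h1.mul_const c
        rw [hg]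
        simpa using h2'
      have hcb : IsCoboundedUnder (· ≤ ·) atTop
          (fun t : ℕ => N (X t - Xstar) ^ ((1 : ℝ) / t)) :=
        isCoboundedUnder_le_of_le atTop (x := 0)
          (fun t => Real.rpow_nonneg (h0 _) _)
      have hbd : IsBoundedUnder (· ≤ ·) atTop g := hgtend.isBoundedUnder_le
      calc atTop.limsup (fun t : ℕ => N (X t - Xstar) ^ ((1 : ℝ) / t))
          ≤ atTop.limsup g := limsup_le_limsup hfg hcb hbd
        _ = c := hgtend.limsup_eq
    have hcomm : (spectralRadius ℂ R * spectralRadius ℂ S).toReal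
        = (spectralRadius ℂ S * spectralRadius ℂ R).toReal := by rw [mul_comm]
    rw [hcomm]
    by_contra hlt
    push_neg at hlt
    set L := atTop.limsup (fun t : ℕ => N (X t - Xstar) ^ ((1 : ℝ) / t)) with hL
    have := claim (((spectralRadius ℂ S * spectralRadius ℂ R).toReal + L) / 2) (by linarith)
    linarith
end

section
/- Assume I − G_0 X_s is invertible for every s < t, where X_0 = 0 and X_{s+1} = H_0 + F_0 X_s (I − G_0 X_s)^{−1} E_0. Then I − T^D_t T^A_t is invertible and X_t = U^A_t (I − T^D_t T^A_t)^{−1} V^D_t. -/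
open Matrix

section Helpers
section Push
variable {k l : Type*} [Fintype k] [Fintype l] [DecidableEq k] [DecidableEq l]

lemma push_pair (A : Matrix k l ℂ) (B : Matrix l k ℂ) (h : IsUnit (1 - A * B)) :
    (1 - B * A) * (1 + B * (1 - A * B)⁻¹ * A) = 1 ∧
    (1 + B * (1 - A * B)⁻¹ * A) * (1 - B * A) = 1 := by
  set C := (1 - A * B)⁻¹ with hC
  have hd : IsUnit (1 - A * B).det := (Matrix.isUnit_iff_isUnit_det _).mp h
  have h1 : (1 - A * B) * C = 1 := Matrix.mul_nonsing_inv _ hd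
  have h2 : C * (1 - A * B) = 1 := Matrix.nonsing_inv_mul _ hd
  have hh1 : C - A * B * C = 1 := by simpa [Matrix.sub_mul] using h1
  have hh2 : C - C * (A * B) = 1 := by simpa [Matrix.mul_sub] using h2
  have e1 : A * B * C = C - 1 := by rw [eq_sub_iff_add_eq, ← hh1]; abel
  have e2 : C * (A * B) = C - 1 := by rw [eq_sub_iff_add_eq, ← hh2]; abel
  have e1' : A * (B * (C * A)) = C * A - A := by
    rw [← Matrix.mul_assoc, ← Matrix.mul_assoc, e1, Matrix.sub_mul, Matrix.one_mul]
  have e2' : C * (A * (B * A)) = C * A - A := by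
    rw [show C * (A * (B * A)) = (C * (A * B)) * A by simp only [Matrix.mul_assoc], e2,
      Matrix.sub_mul, Matrix.one_mul]
  constructor
  · simp only [Matrix.mul_add, Matrix.add_mul, Matrix.sub_mul, Matrix.mul_sub, Matrix.one_mul,
      Matrix.mul_one, Matrix.mul_assoc]
    rw [e1', Matrix.mul_sub]
    abel
  · simp only [Matrix.mul_add, Matrix.add_mul, Matrix.sub_mul, Matrix.mul_sub, Matrix.one_mul,
      Matrix.mul_one, Matrix.mul_assoc]
    rw [e2', Matrix.mul_sub]
    abel

lemma push_isUnit (A : Matrix k l ℂ) (B : Matrix l k ℂ) (h : IsUnit (1 - A * B)) :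
    IsUnit (1 - B * A) :=
  isUnit_iff_exists.mpr ⟨_, (push_pair A B h).1, (push_pair A B h).2⟩

lemma push_inv (A : Matrix k l ℂ) (B : Matrix l k ℂ) (h : IsUnit (1 - A * B)) :
    (1 - B * A)⁻¹ = 1 + B * (1 - A * B)⁻¹ * A :=
  Matrix.inv_eq_right_inv (push_pair A B h).1

lemma push_mul (A : Matrix k l ℂ) (B : Matrix l k ℂ) (h : IsUnit (1 - A * B)) :
    B * (1 - A * B)⁻¹ = (1 - B * A)⁻¹ * B := by
  set C := (1 - A * B)⁻¹ with hC
  have hd : IsUnit (1 - A * B).det := (Matrix.isUnit_iff_isUnit_det _).mp h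
  have h2 : C * (1 - A * B) = 1 := Matrix.nonsing_inv_mul _ hd
  have hh2 : C - C * (A * B) = 1 := by simpa [Matrix.mul_sub] using h2
  have e2 : C * (A * B) = C - 1 := by rw [eq_sub_iff_add_eq, ← hh2]; abel
  rw [push_inv A B h]
  simp only [Matrix.add_mul, Matrix.mul_add, Matrix.one_mul, Matrix.mul_one, Matrix.mul_assoc]
  rw [show B * (C * (A * B)) = B * (C - 1) by rw [← Matrix.mul_assoc, Matrix.mul_assoc, e2],
    Matrix.mul_sub, Matrix.mul_one]
  abel

end Push

lemma mul_cancel_assoc {a : Type*} {K : Type*} [Fintype a] [DecidableEq a] [Fintype K]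
    {A B : Matrix a a ℂ} (h : A * B = 1) (X : Matrix a K ℂ) : A * (B * X) = X := by
  rw [← Matrix.mul_assoc, h, Matrix.one_mul]

section Blocks
variable {i k : Type*} [Fintype i] [Fintype k] [DecidableEq i] [DecidableEq k]

lemma blocks_inv (P : Matrix i i ℂ) (Sg : Matrix k k ℂ) (c : Matrix i k ℂ) (r : Matrix k i ℂ)
    (hP : IsUnit P) (hSg : IsUnit Sg) :
    IsUnit (fromBlocks P (-c) (-r) (Sg + r * (P⁻¹ * c))) ∧
    (fromBlocks P (-c) (-r) (Sg + r * (P⁻¹ * c)))⁻¹ =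
      fromBlocks (P⁻¹ + P⁻¹ * (c * (Sg⁻¹ * (r * P⁻¹)))) (P⁻¹ * (c * Sg⁻¹))
        (Sg⁻¹ * (r * P⁻¹)) Sg⁻¹ := by
  set W := P⁻¹ with hW
  set T := Sg⁻¹ with hT
  have hPd : IsUnit P.det := (Matrix.isUnit_iff_isUnit_det _).mp hP
  have hSd : IsUnit Sg.det := (Matrix.isUnit_iff_isUnit_det _).mp hSg
  have hPW : P * W = 1 := Matrix.mul_nonsing_inv _ hPd
  have hWP : W * P = 1 := Matrix.nonsing_inv_mul _ hPd
  have hST : Sg * T = 1 := Matrix.mul_nonsing_inv _ hSd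
  have hTS : T * Sg = 1 := Matrix.nonsing_inv_mul _ hSd
  have hMN : (fromBlocks P (-c) (-r) (Sg + r * (W * c))) *
      (fromBlocks (W + W * (c * (T * (r * W)))) (W * (c * T)) (T * (r * W)) T) = 1 := by
    rw [fromBlocks_multiply, ← fromBlocks_one]
    have b11 : P * (W + W * (c * (T * (r * W)))) + -c * (T * (r * W)) = 1 := by
      simp only [Matrix.mul_add, Matrix.add_mul, Matrix.neg_mul, Matrix.mul_neg,
        Matrix.mul_assoc, mul_cancel_assoc hPW, mul_cancel_assoc hWP, mul_cancel_assoc hST,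
        mul_cancel_assoc hTS, hPW, hWP, hST, hTS, Matrix.mul_one]
      abel
    have b12 : P * (W * (c * T)) + -c * T = 0 := by
      simp only [Matrix.mul_add, Matrix.add_mul, Matrix.neg_mul, Matrix.mul_neg,
        Matrix.mul_assoc, mul_cancel_assoc hPW, mul_cancel_assoc hWP, mul_cancel_assoc hST,
        mul_cancel_assoc hTS, hPW, hWP, hST, hTS, Matrix.mul_one]
      abel
    have b21 : -r * (W + W * (c * (T * (r * W)))) + (Sg + r * (W * c)) * (T * (r * W)) = 0 := by
      simp only [Matrix.mul_add, Matrix.add_mul, Matrix.neg_mul, Matrix.mul_neg,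
        Matrix.mul_assoc, mul_cancel_assoc hPW, mul_cancel_assoc hWP, mul_cancel_assoc hST,
        mul_cancel_assoc hTS, hPW, hWP, hST, hTS, Matrix.mul_one]
      abel
    have b22 : -r * (W * (c * T)) + (Sg + r * (W * c)) * T = 1 := by
      simp only [Matrix.mul_add, Matrix.add_mul, Matrix.neg_mul, Matrix.mul_neg,
        Matrix.mul_assoc, mul_cancel_assoc hPW, mul_cancel_assoc hWP, mul_cancel_assoc hST,
        mul_cancel_assoc hTS, hPW, hWP, hST, hTS, Matrix.mul_one]
      abel
    rw [b11, b12, b21, b22]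
  have hNM : (fromBlocks (W + W * (c * (T * (r * W)))) (W * (c * T)) (T * (r * W)) T) *
      (fromBlocks P (-c) (-r) (Sg + r * (W * c))) = 1 := by
    rw [fromBlocks_multiply, ← fromBlocks_one]
    have b11 : (W + W * (c * (T * (r * W)))) * P + W * (c * T) * -r = 1 := by
      simp only [Matrix.mul_add, Matrix.add_mul, Matrix.neg_mul, Matrix.mul_neg,
        Matrix.mul_assoc, mul_cancel_assoc hPW, mul_cancel_assoc hWP, mul_cancel_assoc hST,
        mul_cancel_assoc hTS, hPW, hWP, hST, hTS, Matrix.mul_one]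
      abel
    have b12 : (W + W * (c * (T * (r * W)))) * -c + W * (c * T) * (Sg + r * (W * c)) = 0 := by
      simp only [Matrix.mul_add, Matrix.add_mul, Matrix.neg_mul, Matrix.mul_neg,
        Matrix.mul_assoc, mul_cancel_assoc hPW, mul_cancel_assoc hWP, mul_cancel_assoc hST,
        mul_cancel_assoc hTS, hPW, hWP, hST, hTS, Matrix.mul_one]
      abel
    have b21 : T * (r * W) * P + T * -r = 0 := by
      simp only [Matrix.mul_add, Matrix.add_mul, Matrix.neg_mul, Matrix.mul_neg,
        Matrix.mul_assoc, mul_cancel_assoc hPW, mul_cancel_assoc hWP, mul_cancel_assoc hST,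
        mul_cancel_assoc hTS, hPW, hWP, hST, hTS, Matrix.mul_one]
      abel
    have b22 : T * (r * W) * -c + T * (Sg + r * (W * c)) = 1 := by
      simp only [Matrix.mul_add, Matrix.add_mul, Matrix.neg_mul, Matrix.mul_neg,
        Matrix.mul_assoc, mul_cancel_assoc hPW, mul_cancel_assoc hWP, mul_cancel_assoc hST,
        mul_cancel_assoc hTS, hPW, hWP, hST, hTS, Matrix.mul_one]
      abel
    rw [b11, b12, b21, b22]
  exact ⟨isUnit_iff_exists.mpr ⟨_, hMN, hNM⟩, Matrix.inv_eq_right_inv hMN⟩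
end Blocks

/-- Split `Fin (s+1) × Fin r` into the first block and the rest. -/
def spl (s r : ℕ) : (Fin r ⊕ (Fin s × Fin r)) ≃ (Fin (s + 1) × Fin r) where
  toFun := Sum.elim (fun y => (0, y)) (fun z => (z.1.succ, z.2))
  invFun := fun x => Fin.cases (Sum.inl x.2) (fun i => Sum.inr (i, x.2)) x.1
  left_inv := by rintro (y | ⟨i, y⟩) <;> simp
  right_inv := by
    rintro ⟨i, y⟩
    induction i using Fin.cases <;> simp

@[simp] lemma spl_symm_zero {s r : ℕ} (y : Fin r) : (spl s r).symm (0, y) = Sum.inl y := by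
  simp [spl]

@[simp] lemma spl_symm_succ {s r : ℕ} (i : Fin s) (y : Fin r) :
    (spl s r).symm (i.succ, y) = Sum.inr (i, y) := by
  simp [spl]

section Fam
variable {m n p q : ℕ}

/-- `U^A_s`. -/
noncomputable def uaM (Atil : Matrix (Fin m) (Fin m) ℂ) (LB' : Matrix (Fin m) (Fin p) ℂ) (s : ℕ) :
    Matrix (Fin m) (Fin s × Fin p) ℂ :=
  Matrix.of fun i x => (Atil ^ (x.1 : ℕ) * LB') i x.2

/-- `V^D_s`. -/
noncomputable def vdM (Dtil : Matrix (Fin n) (Fin n) ℂ) (RB' : Matrix (Fin p) (Fin n) ℂ) (s : ℕ) :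
    Matrix (Fin s × Fin p) (Fin n) ℂ :=
  Matrix.of fun x j => (RB' * Dtil ^ (x.1 : ℕ)) x.2 j

/-- `T^A_s`. -/
noncomputable def taM (Atil : Matrix (Fin m) (Fin m) ℂ) (LB' : Matrix (Fin m) (Fin p) ℂ)
    (RC' : Matrix (Fin q) (Fin m) ℂ) (YA : Matrix (Fin q) (Fin p) ℂ) (s : ℕ) :
    Matrix (Fin s × Fin q) (Fin s × Fin p) ℂ :=
  Matrix.of fun x y =>
    if x.1 = y.1 then YA x.2 y.2
    else if x.1 < y.1 then (RC' * Atil ^ ((y.1 : ℕ) - (x.1 : ℕ) - 1) * LB') x.2 y.2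
    else 0

/-- `T^D_s`. -/
noncomputable def tdM (Dtil : Matrix (Fin n) (Fin n) ℂ) (RB' : Matrix (Fin p) (Fin n) ℂ)
    (LC' : Matrix (Fin n) (Fin q) ℂ) (YD : Matrix (Fin p) (Fin q) ℂ) (s : ℕ) :
    Matrix (Fin s × Fin p) (Fin s × Fin q) ℂ :=
  Matrix.of fun x y =>
    if x.1 = y.1 then YD x.2 y.2
    else if y.1 < x.1 then (RB' * Dtil ^ ((x.1 : ℕ) - (y.1 : ℕ) - 1) * LC') x.2 y.2
    else 0

variable (Atil : Matrix (Fin m) (Fin m) ℂ) (Dtil : Matrix (Fin n) (Fin n) ℂ)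
  (LB' : Matrix (Fin m) (Fin p) ℂ) (RB' : Matrix (Fin p) (Fin n) ℂ)
  (LC' : Matrix (Fin n) (Fin q) ℂ) (RC' : Matrix (Fin q) (Fin m) ℂ)
  (YA : Matrix (Fin q) (Fin p) ℂ) (YD : Matrix (Fin p) (Fin q) ℂ) (s : ℕ)

lemma uaM_succ :
    uaM Atil LB' (s + 1) =
      (fromCols LB' (Atil * uaM Atil LB' s)).submatrix id (spl s p).symm := by
  ext i ⟨j, y⟩
  induction j using Fin.cases with
  | zero => simp [uaM, fromCols]
  | succ j =>
    have h2 : (Atil * uaM Atil LB' s) i (j, y) = (Atil * (Atil ^ (j : ℕ) * LB')) i y := by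
      simp [uaM, Matrix.mul_apply]
    simp only [fromCols, Matrix.submatrix_apply, spl_symm_succ, Matrix.of_apply,
      Sum.elim_inr, id_eq]
    show (Atil ^ (j.succ : ℕ) * LB') i y = (Atil * uaM Atil LB' s) i (j, y)
    rw [h2, ← Matrix.mul_assoc, ← pow_succ', Fin.val_succ]

lemma vdM_succ :
    vdM Dtil RB' (s + 1) =
      (fromRows RB' (vdM Dtil RB' s * Dtil)).submatrix (spl s p).symm id := by
  ext ⟨i, x⟩ j
  induction i using Fin.cases with
  | zero => simp [vdM]
  | succ i =>
    have h2 : (vdM Dtil RB' s * Dtil) (i, x) j = ((RB' * Dtil ^ (i : ℕ)) * Dtil) x j := by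
      simp [vdM, Matrix.mul_apply]
    simp only [fromRows, Matrix.submatrix_apply, spl_symm_succ, Matrix.of_apply,
      Sum.elim_inr, id_eq]
    show (RB' * Dtil ^ (i.succ : ℕ)) x j = (vdM Dtil RB' s * Dtil) (i, x) j
    rw [h2, Matrix.mul_assoc, ← pow_succ, Fin.val_succ]

end Fam
section T4
variable {m n p q : ℕ}
  (Atil : Matrix (Fin m) (Fin m) ℂ) (Dtil : Matrix (Fin n) (Fin n) ℂ)
  (LB' : Matrix (Fin m) (Fin p) ℂ) (RB' : Matrix (Fin p) (Fin n) ℂ)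
  (LC' : Matrix (Fin n) (Fin q) ℂ) (RC' : Matrix (Fin q) (Fin m) ℂ)
  (YA : Matrix (Fin q) (Fin p) ℂ) (YD : Matrix (Fin p) (Fin q) ℂ) (s : ℕ)

lemma taM_succ :
    taM Atil LB' RC' YA (s + 1) =
      (fromBlocks YA (RC' * uaM Atil LB' s) 0 (taM Atil LB' RC' YA s)).submatrix
        (spl s q).symm (spl s p).symm := by
  ext ⟨i, x⟩ ⟨j, y⟩
  induction i using Fin.cases with
  | zero =>
    induction j using Fin.cases with
    | zero => simp [taM]
    | succ j =>
      have hne : (0 : Fin (s+1)) ≠ j.succ := (Fin.succ_ne_zero j).symm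
      have hlt : (0 : Fin (s+1)) < j.succ := Fin.succ_pos j
      have harr : ((j.succ : Fin (s+1)) : ℕ) - ((0 : Fin (s+1)) : ℕ) - 1 = (j : ℕ) := by
        simp [Fin.val_succ]
      simp only [taM, Matrix.of_apply, Matrix.submatrix_apply, spl_symm_zero, spl_symm_succ,
        fromBlocks_apply₁₂, if_neg hne, if_pos hlt, harr]
      have h2 : (RC' * uaM Atil LB' s) x (j, y) = (RC' * (Atil ^ (j : ℕ) * LB')) x y := by
        simp [uaM, Matrix.mul_apply]
      rw [h2, Matrix.mul_assoc]
  | succ i =>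
    induction j using Fin.cases with
    | zero =>
      have hne : (i.succ : Fin (s+1)) ≠ 0 := Fin.succ_ne_zero i
      have hnlt : ¬ (i.succ : Fin (s+1)) < 0 := by simp
      simp [taM, if_neg hne, if_neg hnlt]
    | succ j =>
      have h1 : ((i.succ : Fin (s+1)) = j.succ) = ((i : Fin s) = j) := by
        simp [Fin.succ_inj]
      have h2 : ((i.succ : Fin (s+1)) < j.succ) = ((i : Fin s) < j) := by
        simp [Fin.succ_lt_succ_iff]
      have h3 : ((j.succ : Fin (s+1)) : ℕ) - ((i.succ : Fin (s+1)) : ℕ) - 1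
          = (j : ℕ) - (i : ℕ) - 1 := by
        simp [Fin.val_succ]
      simp only [taM, Matrix.of_apply, Matrix.submatrix_apply, spl_symm_succ,
        fromBlocks_apply₂₂, h1, h2, h3]

lemma tdM_succ :
    tdM Dtil RB' LC' YD (s + 1) =
      (fromBlocks YD 0 (vdM Dtil RB' s * LC') (tdM Dtil RB' LC' YD s)).submatrix
        (spl s p).symm (spl s q).symm := by
  ext ⟨i, x⟩ ⟨j, y⟩
  induction i using Fin.cases with
  | zero =>
    induction j using Fin.cases with
    | zero => simp [tdM]
    | succ j =>
      have hne : (0 : Fin (s+1)) ≠ j.succ := (Fin.succ_ne_zero j).symm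
      have hnlt : ¬ (j.succ : Fin (s+1)) < 0 := by simp
      simp [tdM, if_neg hne, if_neg hnlt]
  | succ i =>
    induction j using Fin.cases with
    | zero =>
      have hne : (i.succ : Fin (s+1)) ≠ 0 := Fin.succ_ne_zero i
      have hlt : (0 : Fin (s+1)) < i.succ := Fin.succ_pos i
      have harr : ((i.succ : Fin (s+1)) : ℕ) - ((0 : Fin (s+1)) : ℕ) - 1 = (i : ℕ) := by
        simp [Fin.val_succ]
      simp only [tdM, Matrix.of_apply, Matrix.submatrix_apply, spl_symm_zero, spl_symm_succ,
        fromBlocks_apply₂₁, if_neg hne, if_pos hlt, harr]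
      have h2 : (vdM Dtil RB' s * LC') (i, x) y = ((RB' * Dtil ^ (i : ℕ)) * LC') x y := by
        simp [vdM, Matrix.mul_apply]
      rw [h2]
    | succ j =>
      have h1 : ((i.succ : Fin (s+1)) = j.succ) = ((i : Fin s) = j) := by
        simp [Fin.succ_inj]
      have h2 : ((j.succ : Fin (s+1)) < i.succ) = ((j : Fin s) < i) := by
        simp [Fin.succ_lt_succ_iff]
      have h3 : ((i.succ : Fin (s+1)) : ℕ) - ((j.succ : Fin (s+1)) : ℕ) - 1
          = (i : ℕ) - (j : ℕ) - 1 := by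
        simp [Fin.val_succ]
      simp only [tdM, Matrix.of_apply, Matrix.submatrix_apply, spl_symm_succ,
        fromBlocks_apply₂₂, h1, h2, h3]
end T4



section Wood
variable {M P Q' : Type*} [Fintype M] [Fintype P] [Fintype Q']
  [DecidableEq M] [DecidableEq P] [DecidableEq Q']

lemma woodbury (Ab : Matrix M M ℂ) (L : Matrix M P ℂ) (Y : Matrix P Q' ℂ)
    (R : Matrix Q' M ℂ) (hAb : IsUnit Ab) (hS : IsUnit (Ab - L * Y * R)) :
    IsUnit (1 - Y * (R * Ab⁻¹ * L)) ∧
    (Ab - L * Y * R)⁻¹ * L = Ab⁻¹ * (L * (1 - Y * (R * Ab⁻¹ * L))⁻¹) ∧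
    (Ab - L * Y * R)⁻¹ =
      Ab⁻¹ + Ab⁻¹ * (L * ((1 - Y * (R * Ab⁻¹ * L))⁻¹ * (Y * (R * Ab⁻¹)))) := by
  have hAd : IsUnit Ab.det := (Matrix.isUnit_iff_isUnit_det _).mp hAb
  have hAA : Ab * Ab⁻¹ = 1 := Matrix.mul_nonsing_inv _ hAd
  have hAA' : Ab⁻¹ * Ab = 1 := Matrix.nonsing_inv_mul _ hAd
  have hAbu : IsUnit (Ab⁻¹) := isUnit_iff_exists.mpr ⟨Ab, hAA', hAA⟩
  have step1 : Ab - L * Y * R = (1 - L * (Y * (R * Ab⁻¹))) * Ab := by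
    rw [Matrix.sub_mul, Matrix.one_mul]
    congr 1
    calc L * Y * R = L * (Y * (R * (Ab⁻¹ * Ab))) := by
          rw [hAA', Matrix.mul_one, Matrix.mul_assoc]
      _ = L * (Y * (R * Ab⁻¹)) * Ab := by simp only [Matrix.mul_assoc]
  have hJ : IsUnit (1 - L * (Y * (R * Ab⁻¹))) := by
    have : (1 - L * (Y * (R * Ab⁻¹))) = (Ab - L * Y * R) * Ab⁻¹ := by
      rw [step1, Matrix.mul_assoc, hAA, Matrix.mul_one]
    rw [this]
    exact hS.mul hAbu
  have hbr : (Y * (R * Ab⁻¹)) * L = Y * (R * Ab⁻¹ * L) := by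
    simp only [Matrix.mul_assoc]
  have hunit : IsUnit (1 - Y * (R * Ab⁻¹ * L)) := by
    rw [← hbr]; exact push_isUnit L (Y * (R * Ab⁻¹)) hJ
  have hSinv : (Ab - L * Y * R)⁻¹ = Ab⁻¹ * (1 - L * (Y * (R * Ab⁻¹)))⁻¹ := by
    rw [step1, Matrix.mul_inv_rev]
  have hJ2 : IsUnit (1 - Y * (R * Ab⁻¹) * L) := push_isUnit L (Y * (R * Ab⁻¹)) hJ
  have hpm : L * (1 - Y * (R * Ab⁻¹ * L))⁻¹ = (1 - L * (Y * (R * Ab⁻¹)))⁻¹ * L := by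
    rw [← hbr]; exact push_mul (Y * (R * Ab⁻¹)) L hJ2
  refine ⟨hunit, ?_, ?_⟩
  · rw [hSinv, Matrix.mul_assoc, ← hpm]
  · rw [hSinv, push_inv (Y * (R * Ab⁻¹)) L hJ2, hbr]
    rw [Matrix.mul_add, Matrix.mul_one]
    congr 1
    simp only [Matrix.mul_assoc]
end Wood

section Core
variable {M N P Q I K : Type*} [Fintype M] [Fintype N] [Fintype P] [Fintype Q]
  [Fintype I] [Fintype K] [DecidableEq M] [DecidableEq N] [DecidableEq P] [DecidableEq Q]
  [DecidableEq I] [DecidableEq K]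



lemma fromBlocks_sub {l o m' n' : Type*} (A A' : Matrix n' l ℂ) (B B' : Matrix n' m' ℂ)
    (C C' : Matrix o l ℂ) (D D' : Matrix o m' ℂ) :
    fromBlocks A B C D - fromBlocks A' B' C' D' =
      fromBlocks (A - A') (B - B') (C - C') (D - D') := by
  simp only [sub_eq_add_neg, fromBlocks_neg, fromBlocks_add]

set_option maxHeartbeats 1000000 in
lemma step_core
    (Atil : Matrix M M ℂ) (Dtil : Matrix N N ℂ) (LB' : Matrix M P ℂ) (RB' : Matrix P N ℂ)
    (LC' : Matrix N Q ℂ) (RC' : Matrix Q M ℂ) (YA : Matrix Q P ℂ) (YD : Matrix P Q ℂ)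
    (E₀ : Matrix N N ℂ) (F₀ : Matrix M M ℂ) (G₀ : Matrix N M ℂ) (H₀ : Matrix M N ℂ)
    (hZ : IsUnit (1 - YD * YA))
    (hH : H₀ = LB' * (1 - YD * YA)⁻¹ * RB')
    (hF : F₀ = Atil + LB' * (1 - YD * YA)⁻¹ * YD * RC')
    (hG : G₀ = LC' * (1 - YA * YD)⁻¹ * RC')
    (hE : E₀ = Dtil + LC' * (1 - YA * YD)⁻¹ * YA * RB')
    (U' : Matrix M I ℂ) (V' : Matrix I N ℂ) (TA' : Matrix K I ℂ) (TD' : Matrix I K ℂ)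
    (hM' : IsUnit (1 - TD' * TA'))
    (X' : Matrix M N ℂ) (hX' : X' = U' * (1 - TD' * TA')⁻¹ * V')
    (hK : IsUnit (1 - G₀ * X')) :
    IsUnit (1 - (fromBlocks YD 0 (V' * LC') TD') * (fromBlocks YA (RC' * U') 0 TA')) ∧
    (fromCols LB' (Atil * U')) *
      (1 - (fromBlocks YD 0 (V' * LC') TD') * (fromBlocks YA (RC' * U') 0 TA'))⁻¹ *
      (fromRows RB' (V' * Dtil)) = H₀ + F₀ * X' * (1 - G₀ * X')⁻¹ * E₀ := by
  have hZd : IsUnit (1 - YD * YA).det := (Matrix.isUnit_iff_isUnit_det _).mp hZ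
  have hMd : IsUnit (1 - TD' * TA').det := (Matrix.isUnit_iff_isUnit_det _).mp hM'
  have hWM : (1 - TD' * TA') * (1 - TD' * TA')⁻¹ = 1 := Matrix.mul_nonsing_inv _ hMd
  -- `Sg` (the Schur complement) is a unit
  have hu1 : IsUnit (1 - X' * G₀) := push_isUnit G₀ X' hK
  have hu2 : IsUnit (1 - ((1 - TD' * TA')⁻¹ * V' * G₀) * U') := by
    have h' : (1 - X' * G₀) = 1 - U' * ((1 - TD' * TA')⁻¹ * V' * G₀) := by
      rw [hX']; simp only [Matrix.mul_assoc]
    exact push_isUnit U' ((1 - TD' * TA')⁻¹ * V' * G₀) (h' ▸ hu1)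
  have hSgfac : (1 - TD' * TA') - V' * G₀ * U' =
      (1 - TD' * TA') * (1 - ((1 - TD' * TA')⁻¹ * V' * G₀) * U') := by
    rw [Matrix.mul_sub, Matrix.mul_one]
    congr 1
    rw [show (1 - TD' * TA') * ((1 - TD' * TA')⁻¹ * V' * G₀ * U')
        = ((1 - TD' * TA') * (1 - TD' * TA')⁻¹) * (V' * G₀ * U') by
      simp only [Matrix.mul_assoc], hWM, Matrix.one_mul]
  have hSg : IsUnit ((1 - TD' * TA') - V' * G₀ * U') := by rw [hSgfac]; exact hM'.mul hu2
  -- the `(2,2)` block identity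
  have hZp : (1 - YA * YD)⁻¹ = 1 + YA * (1 - YD * YA)⁻¹ * YD := push_inv YD YA hZ
  have hb22 : (1 : Matrix I I ℂ) - (V' * LC' * (RC' * U') + TD' * TA') =
      ((1 - TD' * TA') - V' * G₀ * U') +
        (V' * LC' * YA) * ((1 - YD * YA)⁻¹ * (YD * (RC' * U'))) := by
    rw [hG, hZp]
    simp only [Matrix.mul_add, Matrix.add_mul, Matrix.mul_one, Matrix.one_mul, Matrix.mul_assoc]
    abel
  have hMbEq : (1 : Matrix (P ⊕ I) (P ⊕ I) ℂ) -
      (fromBlocks YD 0 (V' * LC') TD') * (fromBlocks YA (RC' * U') 0 TA') =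
      fromBlocks (1 - YD * YA) (-(YD * (RC' * U'))) (-(V' * LC' * YA))
        (((1 - TD' * TA') - V' * G₀ * U') +
          (V' * LC' * YA) * ((1 - YD * YA)⁻¹ * (YD * (RC' * U')))) := by
    rw [fromBlocks_multiply, ← fromBlocks_one, fromBlocks_sub, ← hb22]
    congr 1 <;> simp
  obtain ⟨hUnit, hInv⟩ := blocks_inv (1 - YD * YA) ((1 - TD' * TA') - V' * G₀ * U')
    (YD * (RC' * U')) (V' * LC' * YA) hZ hSg
  refine ⟨hMbEq ▸ hUnit, ?_⟩
  -- the key reduction: `U' * (Sg⁻¹ * (V' * W)) = X' * ((1 - G₀ X')⁻¹ * W)`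
  have hUT : ∀ (Wm : Matrix N N ℂ),
      U' * (((1 - TD' * TA') - V' * (G₀ * U'))⁻¹ * (V' * Wm)) =
        X' * ((1 - G₀ * X')⁻¹ * Wm) := by
    intro Wm
    rw [show V' * (G₀ * U') = V' * G₀ * U' from (Matrix.mul_assoc _ _ _).symm]
    have hSgInv : ((1 - TD' * TA') - V' * G₀ * U')⁻¹ =
        (1 - ((1 - TD' * TA')⁻¹ * V' * G₀) * U')⁻¹ * (1 - TD' * TA')⁻¹ := by
      rw [hSgfac, Matrix.mul_inv_rev]
    have hpush1 : U' * (1 - ((1 - TD' * TA')⁻¹ * V' * G₀) * U')⁻¹ =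
        (1 - U' * ((1 - TD' * TA')⁻¹ * V' * G₀))⁻¹ * U' :=
      push_mul ((1 - TD' * TA')⁻¹ * V' * G₀) U' hu2
    have hxg : (1 : Matrix M M ℂ) - U' * ((1 - TD' * TA')⁻¹ * V' * G₀) = 1 - X' * G₀ := by
      rw [hX']; simp only [Matrix.mul_assoc]
    have hpush2 : X' * (1 - G₀ * X')⁻¹ = (1 - X' * G₀)⁻¹ * X' := push_mul G₀ X' hK
    calc U' * (((1 - TD' * TA') - V' * G₀ * U')⁻¹ * (V' * Wm))
        = (U' * (1 - ((1 - TD' * TA')⁻¹ * V' * G₀) * U')⁻¹) *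
            ((1 - TD' * TA')⁻¹ * (V' * Wm)) := by
          rw [hSgInv]; simp only [Matrix.mul_assoc]
      _ = (1 - X' * G₀)⁻¹ * (U' * ((1 - TD' * TA')⁻¹ * (V' * Wm))) := by
          rw [hpush1, hxg]; simp only [Matrix.mul_assoc]
      _ = (1 - X' * G₀)⁻¹ * (X' * Wm) := by rw [hX']; simp only [Matrix.mul_assoc]
      _ = X' * ((1 - G₀ * X')⁻¹ * Wm) := by
          rw [← Matrix.mul_assoc, ← hpush2, Matrix.mul_assoc]
  -- rewrite `E₀` in pushed form
  have hE' : E₀ = Dtil + LC' * (YA * ((1 - YD * YA)⁻¹ * RB')) := by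
    rw [hE, Matrix.mul_assoc LC' (1 - YA * YD)⁻¹ YA, ← push_mul YD YA hZ]
    simp only [Matrix.mul_assoc]
  rw [hMbEq, hInv, fromCols_mul_fromBlocks, fromCols_mul_fromRows, hH, hF, hE']
  simp only [Matrix.mul_add, Matrix.add_mul, Matrix.mul_assoc, hUT]
  abel
end Core

section Ind
variable {m n p q : ℕ}









lemma abstract_closed_form
    (Atil : Matrix (Fin m) (Fin m) ℂ) (Dtil : Matrix (Fin n) (Fin n) ℂ)
    (LB' : Matrix (Fin m) (Fin p) ℂ) (RB' : Matrix (Fin p) (Fin n) ℂ)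
    (LC' : Matrix (Fin n) (Fin q) ℂ) (RC' : Matrix (Fin q) (Fin m) ℂ)
    (YA : Matrix (Fin q) (Fin p) ℂ) (YD : Matrix (Fin p) (Fin q) ℂ)
    (E₀ : Matrix (Fin n) (Fin n) ℂ) (F₀ : Matrix (Fin m) (Fin m) ℂ)
    (G₀ : Matrix (Fin n) (Fin m) ℂ) (H₀ : Matrix (Fin m) (Fin n) ℂ)
    (hZ : IsUnit (1 - YD * YA))
    (hH : H₀ = LB' * (1 - YD * YA)⁻¹ * RB')
    (hF : F₀ = Atil + LB' * (1 - YD * YA)⁻¹ * YD * RC')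
    (hG : G₀ = LC' * (1 - YA * YD)⁻¹ * RC')
    (hE : E₀ = Dtil + LC' * (1 - YA * YD)⁻¹ * YA * RB')
    (X : ℕ → Matrix (Fin m) (Fin n) ℂ) (hX0 : X 0 = 0) (t : ℕ)
    (hstep : ∀ s < t, IsUnit (1 - G₀ * X s) ∧
      X (s + 1) = H₀ + F₀ * X s * (1 - G₀ * X s)⁻¹ * E₀) :
    IsUnit (1 - tdM Dtil RB' LC' YD t * taM Atil LB' RC' YA t) ∧
    X t = uaM Atil LB' t *
      (1 - tdM Dtil RB' LC' YD t * taM Atil LB' RC' YA t)⁻¹ * vdM Dtil RB' t := by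
  induction t with
  | zero =>
    constructor
    · rw [Matrix.isUnit_iff_isUnit_det, Matrix.det_isEmpty]
      exact isUnit_one
    · rw [hX0]
      ext i j
      simp [Matrix.mul_apply]
  | succ t ih =>
    have hsteps : ∀ s < t, IsUnit (1 - G₀ * X s) ∧
        X (s + 1) = H₀ + F₀ * X s * (1 - G₀ * X s)⁻¹ * E₀ :=
      fun s hs => hstep s (hs.trans (Nat.lt_succ_self t))
    obtain ⟨ih1, ih2⟩ := ih hsteps
    obtain ⟨hu, hXrec⟩ := hstep t (Nat.lt_succ_self t)
    obtain ⟨hU, hVal⟩ := step_core Atil Dtil LB' RB' LC' RC' YA YD E₀ F₀ G₀ H₀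
      hZ hH hF hG hE (uaM Atil LB' t) (vdM Dtil RB' t) (taM Atil LB' RC' YA t)
      (tdM Dtil RB' LC' YD t) ih1 (X t) ih2 hu
    have hprod : tdM Dtil RB' LC' YD (t+1) * taM Atil LB' RC' YA (t+1) =
        ((fromBlocks YD 0 (vdM Dtil RB' t * LC') (tdM Dtil RB' LC' YD t)) *
         (fromBlocks YA (RC' * uaM Atil LB' t) 0 (taM Atil LB' RC' YA t))).submatrix
          (spl t p).symm (spl t p).symm := by
      rw [tdM_succ, taM_succ, Matrix.submatrix_mul_equiv]
    have hone : (1 : Matrix (Fin (t+1) × Fin p) (Fin (t+1) × Fin p) ℂ) -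
        tdM Dtil RB' LC' YD (t+1) * taM Atil LB' RC' YA (t+1) =
        ((1 : Matrix (Fin p ⊕ (Fin t × Fin p)) (Fin p ⊕ (Fin t × Fin p)) ℂ) -
          (fromBlocks YD 0 (vdM Dtil RB' t * LC') (tdM Dtil RB' LC' YD t)) *
          (fromBlocks YA (RC' * uaM Atil LB' t) 0 (taM Atil LB' RC' YA t))).submatrix
          (spl t p).symm (spl t p).symm := by
      rw [hprod]
      ext a b
      simp [Matrix.sub_apply, Matrix.one_apply, EmbeddingLike.apply_eq_iff_eq]
    constructor
    · rw [hone]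
      exact (Matrix.isUnit_submatrix_equiv _ _).mpr hU
    · rw [hXrec, ← hVal, hone, Matrix.inv_submatrix_equiv, uaM_succ, vdM_succ,
        Matrix.submatrix_mul_equiv, Matrix.submatrix_mul_equiv, Matrix.submatrix_id_id]
end Ind

end Helpers

/-- Toeplitz-structured closed form of the fixed-point iterates
(single shift, zero initial value): `I − T^D_t T^A_t` is invertible and
`X_t = U^A_t (I − T^D_t T^A_t)⁻¹ V^D_t`. -/
theorem fixedpoint_toeplitz_closed_form {m n p q : ℕ}
    (hm : 0 < m) (hn : 0 < n) (hp : 0 < p) (hq : 0 < q)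
    (A : Matrix (Fin m) (Fin m) ℂ) (D : Matrix (Fin n) (Fin n) ℂ)
    (LB : Matrix (Fin m) (Fin p) ℂ) (RB : Matrix (Fin p) (Fin n) ℂ)
    (LC : Matrix (Fin n) (Fin q) ℂ) (RC : Matrix (Fin q) (Fin m) ℂ)
    (α β : ℂ) (hαβ : α + β ≠ 0)
    (hDα : IsUnit (α • (1 : Matrix (Fin n) (Fin n) ℂ) + D))
    (hAβ : IsUnit (β • (1 : Matrix (Fin m) (Fin m) ℂ) + A))
    (hS : IsUnit ((β • 1 + A) - (LB * RB) * (α • 1 + D)⁻¹ * (LC * RC)))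
    (E₀ : Matrix (Fin n) (Fin n) ℂ) (F₀ : Matrix (Fin m) (Fin m) ℂ)
    (G₀ : Matrix (Fin n) (Fin m) ℂ) (H₀ : Matrix (Fin m) (Fin n) ℂ)
    (hE : E₀ = -((((α • 1 + D) - (LC * RC) * (β • 1 + A)⁻¹ * (LB * RB))⁻¹) *
      (((-β) • 1 + D) - (LC * RC) * (β • 1 + A)⁻¹ * (LB * RB))))
    (hF : F₀ = -((((β • 1 + A) - (LB * RB) * (α • 1 + D)⁻¹ * (LC * RC))⁻¹) *
      (((-α) • 1 + A) - (LB * RB) * (α • 1 + D)⁻¹ * (LC * RC))))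
    (hG : G₀ = (α + β) • ((((α • 1 + D) - (LC * RC) * (β • 1 + A)⁻¹ * (LB * RB))⁻¹) *
      (LC * RC) * (β • 1 + A)⁻¹))
    (hH : H₀ = (α + β) • ((((β • 1 + A) - (LB * RB) * (α • 1 + D)⁻¹ * (LC * RC))⁻¹) *
      (LB * RB) * (α • 1 + D)⁻¹))
    (Atil : Matrix (Fin m) (Fin m) ℂ) (hAtil : Atil = -((β • 1 + A)⁻¹ * ((-α) • 1 + A)))
    (Dtil : Matrix (Fin n) (Fin n) ℂ) (hDtil : Dtil = -((α • 1 + D)⁻¹ * ((-β) • 1 + D)))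
    (LB' : Matrix (Fin m) (Fin p) ℂ) (hLB' : LB' = (β • 1 + A)⁻¹ * LB)
    (RC' : Matrix (Fin q) (Fin m) ℂ) (hRC' : RC' = (α + β) • (RC * (β • 1 + A)⁻¹))
    (YA : Matrix (Fin q) (Fin p) ℂ) (hYA : YA = RC * (β • 1 + A)⁻¹ * LB)
    (LC' : Matrix (Fin n) (Fin q) ℂ) (hLC' : LC' = (α • 1 + D)⁻¹ * LC)
    (RB' : Matrix (Fin p) (Fin n) ℂ) (hRB' : RB' = (α + β) • (RB * (α • 1 + D)⁻¹))
    (YD : Matrix (Fin p) (Fin q) ℂ) (hYD : YD = RB * (α • 1 + D)⁻¹ * LC)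
    (t : ℕ) (ht : 0 < t)
    (X : ℕ → Matrix (Fin m) (Fin n) ℂ) (hX0 : X 0 = 0)
    (hstep : ∀ s < t, IsUnit (1 - G₀ * X s) ∧
      X (s + 1) = H₀ + F₀ * X s * (1 - G₀ * X s)⁻¹ * E₀)
    (UA : Matrix (Fin m) (Fin t × Fin p) ℂ)
    (hUA : UA = Matrix.of fun i x => (Atil ^ (x.1 : ℕ) * LB') i x.2)
    (VD : Matrix (Fin t × Fin p) (Fin n) ℂ)
    (hVD : VD = Matrix.of fun x j => (RB' * Dtil ^ (x.1 : ℕ)) x.2 j)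
    (TA : Matrix (Fin t × Fin q) (Fin t × Fin p) ℂ)
    (hTA : TA = Matrix.of fun x y =>
      if x.1 = y.1 then YA x.2 y.2
      else if x.1 < y.1 then (RC' * Atil ^ ((y.1 : ℕ) - (x.1 : ℕ) - 1) * LB') x.2 y.2
      else 0)
    (TD : Matrix (Fin t × Fin p) (Fin t × Fin q) ℂ)
    (hTD : TD = Matrix.of fun x y =>
      if x.1 = y.1 then YD x.2 y.2
      else if y.1 < x.1 then (RB' * Dtil ^ ((x.1 : ℕ) - (y.1 : ℕ) - 1) * LC') x.2 y.2
      else 0) :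
    IsUnit (1 - TD * TA) ∧ X t = UA * (1 - TD * TA)⁻¹ * VD := by
  have hAd : IsUnit (β • (1 : Matrix (Fin m) (Fin m) ℂ) + A).det :=
    (Matrix.isUnit_iff_isUnit_det _).mp hAβ
  have hDd : IsUnit (α • (1 : Matrix (Fin n) (Fin n) ℂ) + D).det :=
    (Matrix.isUnit_iff_isUnit_det _).mp hDα
  have hAA' : (β • 1 + A)⁻¹ * (β • (1 : Matrix (Fin m) (Fin m) ℂ) + A) = 1 :=
    Matrix.nonsing_inv_mul _ hAd
  have hDD' : (α • 1 + D)⁻¹ * (α • (1 : Matrix (Fin n) (Fin n) ℂ) + D) = 1 :=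
    Matrix.nonsing_inv_mul _ hDd
  -- rewrite `S` and `Sh` in factored low-rank form
  have hSrw : (β • 1 + A) - (LB * RB) * (α • 1 + D)⁻¹ * (LC * RC)
      = (β • 1 + A) - LB * YD * RC := by
    rw [hYD]; congr 1; simp only [Matrix.mul_assoc]
  have hShrw : (α • 1 + D) - (LC * RC) * (β • 1 + A)⁻¹ * (LB * RB)
      = (α • 1 + D) - LC * YA * RB := by
    rw [hYA]; congr 1; simp only [Matrix.mul_assoc]
  have hSu : IsUnit ((β • 1 + A) - LB * YD * RC) := hSrw ▸ hS
  -- A-side Woodbury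
  obtain ⟨wA1, wA2, wA3⟩ := woodbury (β • 1 + A) LB YD RC hAβ hSu
  rw [← hYA] at wA1 wA2 wA3
  -- `Sh` is a unit
  have hZc2 : IsUnit (1 - YA * YD) := push_isUnit YD YA wA1
  have hbrD : YA * (RB * (α • 1 + D)⁻¹) * LC = YA * YD := by
    rw [hYD]; simp only [Matrix.mul_assoc]
  have hJD : IsUnit (1 - LC * (YA * (RB * (α • 1 + D)⁻¹))) := by
    apply push_isUnit (YA * (RB * (α • 1 + D)⁻¹)) LC
    rw [hbrD]; exact hZc2
  have hstep1D : (α • 1 + D) - LC * YA * RB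
      = (1 - LC * (YA * (RB * (α • 1 + D)⁻¹))) * (α • 1 + D) := by
    rw [Matrix.sub_mul, Matrix.one_mul]
    congr 1
    calc LC * YA * RB = LC * (YA * (RB * ((α • 1 + D)⁻¹ * (α • 1 + D)))) := by
          rw [hDD', Matrix.mul_one]; simp only [Matrix.mul_assoc]
      _ = LC * (YA * (RB * (α • 1 + D)⁻¹)) * (α • 1 + D) := by
          simp only [Matrix.mul_assoc]
  have hShu : IsUnit ((α • 1 + D) - LC * YA * RB) := by
    rw [hstep1D]; exact hJD.mul hDα
  -- D-side Woodbury
  obtain ⟨wD1, wD2, wD3⟩ := woodbury (α • 1 + D) LC YA RB hDα hShu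
  rw [← hYD] at wD1 wD2 wD3
  -- `H₀` in abstract form
  have hHc : H₀ = LB' * (1 - YD * YA)⁻¹ * RB' := by
    rw [hH, hSrw, hLB', hRB', Matrix.mul_smul]
    congr 1
    calc ((β • 1 + A) - LB * YD * RC)⁻¹ * (LB * RB) * (α • 1 + D)⁻¹
        = (((β • 1 + A) - LB * YD * RC)⁻¹ * LB) * (RB * (α • 1 + D)⁻¹) := by
          simp only [Matrix.mul_assoc]
      _ = (β • 1 + A)⁻¹ * (LB * (1 - YD * YA)⁻¹) * (RB * (α • 1 + D)⁻¹) := by rw [wA2]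
      _ = (β • 1 + A)⁻¹ * LB * (1 - YD * YA)⁻¹ * (RB * (α • 1 + D)⁻¹) := by
          simp only [Matrix.mul_assoc]
  -- `G₀` in abstract form
  have hGc : G₀ = LC' * (1 - YA * YD)⁻¹ * RC' := by
    rw [hG, hShrw, hLC', hRC', Matrix.mul_smul]
    congr 1
    calc ((α • 1 + D) - LC * YA * RB)⁻¹ * (LC * RC) * (β • 1 + A)⁻¹
        = (((α • 1 + D) - LC * YA * RB)⁻¹ * LC) * (RC * (β • 1 + A)⁻¹) := by
          simp only [Matrix.mul_assoc]
      _ = (α • 1 + D)⁻¹ * (LC * (1 - YA * YD)⁻¹) * (RC * (β • 1 + A)⁻¹) := by rw [wD2]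
      _ = (α • 1 + D)⁻¹ * LC * (1 - YA * YD)⁻¹ * (RC * (β • 1 + A)⁻¹) := by
          simp only [Matrix.mul_assoc]
  -- `F₀` in abstract form
  have hSS : ((β • 1 + A) - LB * YD * RC)⁻¹ * ((β • 1 + A) - LB * YD * RC) = 1 :=
    Matrix.nonsing_inv_mul _ ((Matrix.isUnit_iff_isUnit_det _).mp hSu)
  have hsmA : ((-α) • 1 + A) - (LB * RB) * (α • 1 + D)⁻¹ * (LC * RC)
      = ((β • 1 + A) - LB * YD * RC) - (α + β) • 1 := by
    rw [← hSrw]; module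
  have hAtilc : Atil = (α + β) • (β • 1 + A)⁻¹ - 1 := by
    have hsm2 : ((-α) • 1 + A) = (β • 1 + A) - (α + β) • (1 : Matrix (Fin m) (Fin m) ℂ) := by
      module
    rw [hAtil, hsm2, Matrix.mul_sub, hAA', Matrix.mul_smul, Matrix.mul_one, neg_sub]
  have hFc : F₀ = Atil + LB' * (1 - YD * YA)⁻¹ * YD * RC' := by
    rw [hF, hSrw, hsmA, Matrix.mul_sub, hSS, Matrix.mul_smul, Matrix.mul_one, neg_sub,
      wA3, hAtilc, hLB', hRC']
    rw [smul_add, Matrix.mul_smul,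
      show (β • 1 + A)⁻¹ * LB * (1 - YD * YA)⁻¹ * YD * (RC * (β • 1 + A)⁻¹)
        = (β • 1 + A)⁻¹ * (LB * ((1 - YD * YA)⁻¹ * (YD * (RC * (β • 1 + A)⁻¹))))
        from by simp only [Matrix.mul_assoc]]
    abel
  -- `E₀` in abstract form
  have hShS : ((α • 1 + D) - LC * YA * RB)⁻¹ * ((α • 1 + D) - LC * YA * RB) = 1 :=
    Matrix.nonsing_inv_mul _ ((Matrix.isUnit_iff_isUnit_det _).mp hShu)
  have hsmD : ((-β) • 1 + D) - (LC * RC) * (β • 1 + A)⁻¹ * (LB * RB)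
      = ((α • 1 + D) - LC * YA * RB) - (α + β) • 1 := by
    rw [← hShrw]; module
  have hDtilc : Dtil = (α + β) • (α • 1 + D)⁻¹ - 1 := by
    have hsm2 : ((-β) • 1 + D) = (α • 1 + D) - (α + β) • (1 : Matrix (Fin n) (Fin n) ℂ) := by
      module
    rw [hDtil, hsm2, Matrix.mul_sub, hDD', Matrix.mul_smul, Matrix.mul_one, neg_sub]
  have hEc : E₀ = Dtil + LC' * (1 - YA * YD)⁻¹ * YA * RB' := by
    rw [hE, hShrw, hsmD, Matrix.mul_sub, hShS, Matrix.mul_smul, Matrix.mul_one, neg_sub,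
      wD3, hDtilc, hLC', hRB']
    rw [smul_add, Matrix.mul_smul,
      show (α • 1 + D)⁻¹ * LC * (1 - YA * YD)⁻¹ * YA * (RB * (α • 1 + D)⁻¹)
        = (α • 1 + D)⁻¹ * (LC * ((1 - YA * YD)⁻¹ * (YA * (RB * (α • 1 + D)⁻¹))))
        from by simp only [Matrix.mul_assoc]]
    abel
  -- apply the abstract closed form
  have habs := abstract_closed_form Atil Dtil LB' RB' LC' RC' YA YD E₀ F₀ G₀ H₀
    wA1 hHc hFc hGc hEc X hX0 t hstep
  have hUAe : UA = uaM Atil LB' t := by rw [hUA]; rfl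
  have hVDe : VD = vdM Dtil RB' t := by rw [hVD]; rfl
  have hTAe : TA = taM Atil LB' RC' YA t := by rw [hTA]; rfl
  have hTDe : TD = tdM Dtil RB' LC' YD t := by rw [hTD]; rfl
  rw [hUAe, hVDe, hTAe, hTDe]
  exact habs
end
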